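/- arXiv:2207.00140 — 8 statements merged into one kernel-verified Lean document; each statement's English description precedes it below -/
import Mathlib

section
/- Let L be a number field with r real embeddings and 2s imaginary embeddings, and let O ⊆ O_L be a subring of finite additive index (i.e., an order of L). Then there is a group isomorphism Oˣ ≅ μ(O) × ℤ^{r+s−1}, where Oˣ is the unit group of O. -/
/-!
Since `O` has finite additive index `k`, it contains the ideal `k 𝓞 L`, whose quotient is finite;
if `N` is the order of `(𝓞 L ⧸ k 𝓞 L)ˣ`, then `u ^ N ∈ 1 + k 𝓞 L ⊆ O` for every unit `u` of `𝓞 L`.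
So `Oˣ` is a subgroup of `(𝓞 L)ˣ` containing all `N`-th powers: it is finitely generated of the
same rank `r + s - 1` as `(𝓞 L)ˣ` (Dirichlet's unit theorem), and the structure theorem for
finitely generated abelian groups splits off its torsion subgroup `μ(O)` with a free complement.
-/

open NumberField CommGroup Module
open scoped DirectSum

section GroupTheory

variable {G F T : Type*} [CommGroup G] [CommGroup F] [CommGroup T]

lemma CommGroup.torsion_prod_eq_range_inr [IsMulTorsionFree F] (hT : IsMulTorsion T) :
    torsion (F × T) = (MonoidHom.inr F T).range := by
  ext ⟨f, t⟩
  simp [torsion_prod, Subgroup.mem_prod, eq_comm,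
    isMulTorsionFree_iff_torsion_eq_bot.mp inferInstance, torsion_eq_top_iff.mpr hT]

lemma CommGroup.nonempty_mulEquiv_torsion_prod_of_mulEquiv_prod [IsMulTorsionFree F]
    (hT : IsMulTorsion T) (e : G ≃* F × T) : Nonempty (G ≃* torsion G × F) := by
  let eT : torsion G ≃* T :=
    ((e.subgroupMap (torsion G)).trans (MulEquiv.subgroupCongr
      (e.map_torsion.trans (torsion_prod_eq_range_inr hT)))).trans
      (MonoidHom.ofInjective (f := MonoidHom.inr F T) (Prod.mk_right_injective 1)).symm
  exact ⟨(e.trans MulEquiv.prodComm).trans (eT.symm.prodCongr (MulEquiv.refl F))⟩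

lemma Submodule.finrank_int_eq_of_nsmul_mem {M : Type*} [AddCommGroup M] [Module.Finite ℤ M]
    (N : Submodule ℤ M) {n : ℕ} (hn : n ≠ 0) (h : ∀ x : M, n • x ∈ N) :
    finrank ℤ N = finrank ℤ M := by
  have hquot : IsAddTorsion (M ⧸ N) := by
    rintro ⟨x⟩
    exact isOfFinAddOrder_iff_nsmul_eq_zero.mpr
      ⟨n, Nat.pos_of_ne_zero hn, (Submodule.Quotient.mk_eq_zero N).mpr (h x)⟩
  rw [← N.finrank_quotient_add_finrank,
    (isAddTorsion_iff_isTorsion_int.mp hquot).finrank_eq_zero, zero_add]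

lemma Module.finrank_int_prod_of_finite (M A : Type*) [AddCommGroup M] [AddCommGroup A]
    [Module.Finite ℤ M] [Finite A] : finrank ℤ (M × A) = finrank ℤ M := by
  rw [← (LinearMap.inl ℤ M A).finrank_range_of_inj LinearMap.inl_injective]
  refine (Submodule.finrank_int_eq_of_nsmul_mem _ (Nat.card_pos (α := A)).ne' fun x ↦ ?_).symm
  exact ⟨Nat.card A • x.1, Prod.ext rfl (card_nsmul_eq_zero').symm⟩

lemma CommGroup.nonempty_mulEquiv_torsion_prod [Module.Finite ℤ (Additive G)] :
    Nonempty (G ≃* torsion G × Multiplicative (Fin (finrank ℤ (Additive G)) → ℤ)) := by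
  have : AddGroup.FG (Additive G) := Module.Finite.iff_addGroup_fg.mp inferInstance
  obtain ⟨n, ι, _, p, hp, k, ⟨e⟩⟩ := AddCommGroup.equiv_free_prod_directSum_zmod (Additive G)
  have : ∀ i, NeZero (p i ^ k i) := fun i ↦ ⟨pow_ne_zero _ (hp i).ne_zero⟩
  have : Finite (⨁ i, ZMod (p i ^ k i)) := Finite.of_equiv _ DFinsupp.equivFunOnFintype.symm
  let e' : Additive G ≃+ (Fin n → ℤ) × ⨁ i, ZMod (p i ^ k i) :=
    e.trans (Finsupp.addEquivFunOnFinite.prodCongr (AddEquiv.refl _))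
  have hn : finrank ℤ (Additive G) = n := by
    rw [e'.toIntLinearEquiv.finrank_eq, finrank_int_prod_of_finite, finrank_fin_fun]
  rw [hn]
  exact nonempty_mulEquiv_torsion_prod_of_mulEquiv_prod isMulTorsion_of_finite
    (e'.toMultiplicativeRight.trans (MulEquiv.prodMultiplicative _ _))

lemma finrank_additive_eq_of_pow_mem_range {H : Type*} [CommGroup H]
    [Module.Finite ℤ (Additive G)] (f : H →* G) (hf : Function.Injective f) {n : ℕ} (hn : n ≠ 0)
    (h : ∀ g, g ^ n ∈ f.range) : finrank ℤ (Additive H) = finrank ℤ (Additive G) := by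
  let φ := f.toAdditive.toIntLinearMap
  rw [← LinearMap.finrank_range_of_inj (f := φ) hf]
  exact φ.range.finrank_int_eq_of_nsmul_mem hn h

end GroupTheory

namespace Subring

variable {R : Type*} [CommRing R] (O : Subring R)

lemma pow_card_units_mem_range_unitsMap (I : Ideal R) (hI : (I : Set R) ⊆ O) [Finite (R ⧸ I)]
    (u : Rˣ) : u ^ Nat.card (R ⧸ I)ˣ ∈ (Units.map O.subtype.toMonoidHom).range := by
  have hmem (v : Rˣ) : ((v ^ Nat.card (R ⧸ I)ˣ : Rˣ) : R) ∈ O := by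
    have hone : Units.map (Ideal.Quotient.mk I).toMonoidHom v ^ Nat.card (R ⧸ I)ˣ = 1 :=
      pow_card_eq_one'
    have hsub : ((v ^ Nat.card (R ⧸ I)ˣ : Rˣ) : R) - 1 ∈ I := Ideal.Quotient.eq.mp <| by
      rw [map_one, Units.val_pow_eq_pow_val, map_pow]
      exact congrArg Units.val hone
    simpa using O.add_mem (hI hsub) O.one_mem
  exact ⟨⟨⟨_, hmem u⟩, ⟨_, hmem u⁻¹⟩, by ext; simp [← mul_pow], by ext; simp [← mul_pow]⟩,
    Units.ext rfl⟩

lemma span_index_subset : (Ideal.span {(O.toAddSubgroup.index : R)} : Set R) ⊆ O := by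
  intro x hx
  obtain ⟨c, rfl⟩ := Ideal.mem_span_singleton'.mp hx
  simpa [nsmul_eq_mul, mul_comm] using O.toAddSubgroup.nsmul_index_mem c

lemma exists_pow_mem_range_unitsMap [IsDomain R] [CharZero R] [Module.Free ℤ R]
    [Module.Finite ℤ R] (hO : O.toAddSubgroup.index ≠ 0) :
    ∃ n ≠ 0, ∀ u : Rˣ, u ^ n ∈ (Units.map O.subtype.toMonoidHom).range := by
  set I := Ideal.span {(O.toAddSubgroup.index : R)}
  have : Finite (R ⧸ I) := I.finiteQuotientOfFreeOfNeBot (by simpa [I] using hO)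
  exact ⟨_, Nat.card_pos.ne', O.pow_card_units_mem_range_unitsMap I O.span_index_subset⟩

end Subring

namespace NumberField

variable {K : Type*} [Field K]

lemma ComplexEmbedding.isReal_iff_forall_im_eq_zero {φ : K →+* ℂ} :
    ComplexEmbedding.IsReal φ ↔ ∀ x, (φ x).im = 0 := by
  rw [ComplexEmbedding.isReal_iff, RingHom.ext_iff]
  exact forall_congr' fun x ↦ by rw [ComplexEmbedding.conjugate_coe_eq, Complex.conj_eq_iff_im]

variable (K) [NumberField K]

lemma InfinitePlace.card_embeddings_forall_im_eq_zero :
    Nat.card {φ : K →+* ℂ // ∀ x, (φ x).im = 0} = nrRealPlaces K := by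
  classical
  rw [← card_real_embeddings, ← Nat.card_eq_fintype_card]
  exact Nat.card_congr
    (Equiv.subtypeEquivRight fun _ ↦ ComplexEmbedding.isReal_iff_forall_im_eq_zero).symm

lemma InfinitePlace.card_embeddings_not_forall_im_eq_zero :
    Nat.card {φ : K →+* ℂ // ¬ ∀ x, (φ x).im = 0} = 2 * nrComplexPlaces K := by
  classical
  rw [← card_complex_embeddings, ← Nat.card_eq_fintype_card]
  exact Nat.card_congr
    (Equiv.subtypeEquivRight fun _ ↦ ComplexEmbedding.isReal_iff_forall_im_eq_zero.not).symm

end NumberField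

/-- Let `L` be a number field with `r` real embeddings and `2s` imaginary (non-real) embeddings,
and let `O ⊆ 𝓞 L` be a subring of finite additive index (an order of `L`). Then
`Oˣ ≅ μ(O) × ℤ^(r+s-1)`, where `μ(O)`, the group of roots of unity of `O`, is the torsion
subgroup of `Oˣ`. -/
theorem units_of_order_iso (L : Type*) [Field L] [NumberField L] (r s : ℕ)
    (hr : Nat.card {σ : L →+* ℂ // ∀ x, (σ x).im = 0} = r)
    (hs : Nat.card {σ : L →+* ℂ // ¬ ∀ x, (σ x).im = 0} = 2 * s)
    (O : Subring (𝓞 L)) (hO : O.toAddSubgroup.index ≠ 0) :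
    Nonempty (Oˣ ≃* (CommGroup.torsion Oˣ) × Multiplicative (Fin (r + s - 1) → ℤ)) := by
  let j : Oˣ →* (𝓞 L)ˣ := Units.map O.subtype.toMonoidHom
  have hj : Function.Injective j := Units.map_injective Subtype.val_injective
  have : Module.Finite ℤ (Additive Oˣ) := .of_injective j.toAdditive.toIntLinearMap hj
  obtain ⟨n, hn, hpow⟩ := O.exists_pow_mem_range_unitsMap hO
  have hrank : finrank ℤ (Additive Oˣ) = r + s - 1 := by
    have hcomplex := InfinitePlace.card_embeddings_not_forall_im_eq_zero L
    rw [finrank_additive_eq_of_pow_mem_range j hj hn hpow, Units.finrank_eq, Units.rank,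
      InfinitePlace.card_eq_nrRealPlaces_add_nrComplexPlaces,
      ← InfinitePlace.card_embeddings_forall_im_eq_zero, hr]
    omega
  exact hrank ▸ nonempty_mulEquiv_torsion_prod
end

section
/- Let L be a subfield of ℂ that is algebraic over ℚ and let m ≥ 2 be an integer. If ζ ∈ R_{m,L} satisfies ζ^n = 1 for some integer n ≥ 1, then ζ = 1 or ζ = −1; that is, the only roots of unity contained in R_{m,L} are ±1. -/
open Complex

noncomputable section

/-- The ring of integers of a subfield `L ⊆ ℂ`: the elements of `L` that are integral
over `ℤ`, viewed as a subring of `ℂ`. -/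
def ringOfInt (L : Subfield ℂ) : Subring ℂ where
  carrier := {x : ℂ | x ∈ L ∧ IsIntegral ℤ x}
  zero_mem' := ⟨L.zero_mem, isIntegral_zero⟩
  one_mem' := ⟨L.one_mem, isIntegral_one⟩
  add_mem' := fun hx hy => ⟨L.add_mem hx.1 hy.1, hx.2.add hy.2⟩
  mul_mem' := fun hx hy => ⟨L.mul_mem hx.1 hy.1, hx.2.mul hy.2⟩
  neg_mem' := fun hx => ⟨L.neg_mem hx.1, hx.2.neg⟩

lemma ringOfInt_mem_subfield {L : Subfield ℂ} {x : ℂ} (hx : x ∈ ringOfInt L) : x ∈ L := hx.1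

/-- The underlying set of the ring `R_{m,L} = {x ∈ O_L : ∃ a ∈ O_L, ∃ j, 0 ≤ j < m, x = j + m·a}`. -/
def Rset (m : ℕ) (L : Subfield ℂ) : Set ℂ :=
  {x : ℂ | x ∈ ringOfInt L ∧
    ∃ a ∈ ringOfInt L, ∃ j : ℤ, 0 ≤ j ∧ j < (m : ℤ) ∧ x = (j : ℂ) + (m : ℂ) * a}

lemma Rset_norm {m : ℕ} (hm : m ≠ 0) {L : Subfield ℂ} {x : ℂ} (hx : x ∈ ringOfInt L)
    {a : ℂ} (ha : a ∈ ringOfInt L) {j : ℤ} (h : x = (j : ℂ) + (m : ℂ) * a) :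
    x ∈ Rset m L := by
  have hm' : (0 : ℤ) < m := by exact_mod_cast Nat.pos_of_ne_zero hm
  refine ⟨hx, a + ((j / (m : ℤ) : ℤ) : ℂ), ?_, j % m,
    Int.emod_nonneg j (by exact_mod_cast hm), Int.emod_lt_of_pos j hm', ?_⟩
  · exact (ringOfInt L).add_mem ha (intCast_mem (ringOfInt L) _)
  · have key : ((m : ℤ) * (j / (m : ℤ)) + j % (m : ℤ) : ℤ) = j := Int.mul_ediv_add_emod j m
    have key' := congrArg (Int.cast : ℤ → ℂ) key
    push_cast at key'
    rw [h]
    linear_combination -key'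

/-- The ring `R_{m,L}`, as a subring of `ℂ`. -/
def Rring (m : ℕ) (hm : m ≠ 0) (L : Subfield ℂ) : Subring ℂ where
  carrier := Rset m L
  zero_mem' := Rset_norm hm (ringOfInt L).zero_mem (ringOfInt L).zero_mem (j := 0) (by simp)
  one_mem' := Rset_norm hm (ringOfInt L).one_mem (ringOfInt L).zero_mem (j := 1) (by simp)
  add_mem' := by
    rintro x y ⟨hx, a, ha, j, _, _, rfl⟩ ⟨hy, b, hb, k, _, _, rfl⟩
    exact Rset_norm hm ((ringOfInt L).add_mem hx hy) ((ringOfInt L).add_mem ha hb)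
      (j := j + k) (by push_cast; ring)
  mul_mem' := by
    rintro x y ⟨hx, a, ha, j, _, _, rfl⟩ ⟨hy, b, hb, k, _, _, rfl⟩
    refine Rset_norm hm ((ringOfInt L).mul_mem hx hy)
      (a := (j : ℂ) * b + (k : ℂ) * a + (m : ℂ) * (a * b)) ?_ (j := j * k) (by push_cast; ring)
    exact (ringOfInt L).add_mem
      ((ringOfInt L).add_mem ((ringOfInt L).mul_mem (intCast_mem _ j) hb)
        ((ringOfInt L).mul_mem (intCast_mem _ k) ha))
      ((ringOfInt L).mul_mem (natCast_mem _ m) ((ringOfInt L).mul_mem ha hb))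
  neg_mem' := by
    rintro x ⟨hx, a, ha, j, _, _, rfl⟩
    exact Rset_norm hm ((ringOfInt L).neg_mem hx) ((ringOfInt L).neg_mem ha)
      (j := -j) (by push_cast; ring)

lemma twoNZ : (2 : ℕ) ≠ 0 := by norm_num

/-- A subfield of `ℂ` is totally real if every embedding into `ℂ` has real image. -/
def IsTotallyRealSubfield (K : Subfield ℂ) : Prop :=
  ∀ (σ : K →+* ℂ) (x : K), (σ x).im = 0

/-- A subfield of `ℂ` is totally imaginary if no embedding into `ℂ` has real image. -/
def IsTotallyImaginarySubfield (L : Subfield ℂ) : Prop :=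
  ∀ σ : L →+* ℂ, ∃ x : L, (σ x).im ≠ 0

/-- `L` is a totally imaginary quadratic extension of the totally real field `K`:
`K ⊆ L ⊆ ℂ` are algebraic over `ℚ`, `L` is closed under complex conjugation,
`[L : K] = 2`, `K` is totally real and `L` is totally imaginary. -/
structure IsTIQExt (K L : Subfield ℂ) : Prop where
  le : K ≤ L
  alg : ∀ x : L, IsAlgebraic ℚ (x : ℂ)
  conj_closed : ∀ x ∈ L, (starRingEnd ℂ) x ∈ L
  tot_real : IsTotallyRealSubfield K
  tot_imaginary : IsTotallyImaginarySubfield L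
  deg : letI := (Subfield.inclusion le).toAlgebra; Module.finrank K L = 2

/-- An algebraic number `α ∈ ℂ` is totally real if all complex roots of its minimal
polynomial over `ℚ` are real. -/
def TotallyRealNum (α : ℂ) : Prop :=
  IsAlgebraic ℚ α ∧ ∀ z : ℂ, Polynomial.aeval z (minpoly ℚ α) = 0 → z.im = 0

/-- The set `X₀ = {u₁² + u₂² − u₃² − u₄² : uᵢ ∈ R_{2,L}ˣ}`. -/
def X0 (L : Subfield ℂ) : Set ℂ :=
  {x : ℂ | ∃ u₁ u₂ u₃ u₄ : (Rring 2 twoNZ L)ˣ,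
    x = ((u₁ : Rring 2 twoNZ L) : ℂ) ^ 2 + ((u₂ : Rring 2 twoNZ L) : ℂ) ^ 2
      - ((u₃ : Rring 2 twoNZ L) : ℂ) ^ 2 - ((u₄ : Rring 2 twoNZ L) : ℂ) ^ 2}

/-- The set `X₁ = {d ∈ O_L : 32·d ∈ X₀}`. -/
def X1 (L : Subfield ℂ) : Set ℂ :=
  {d : ℂ | d ∈ ringOfInt L ∧ 32 * d ∈ X0 L}

/-- The set `X = {α ∈ O_L : ∃ x₁, x₂ ∈ X₁, 4·α = x₁ − x₂}`. -/
def XX (L : Subfield ℂ) : Set ℂ :=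
  {α : ℂ | α ∈ ringOfInt L ∧ ∃ x₁ ∈ X1 L, ∃ x₂ ∈ X1 L, 4 * α = x₁ - x₂}

/-- The set of all totally real algebraic numbers (the field `ℚ^tr`). -/
def QtrSet : Set ℂ := {z : ℂ | TotallyRealNum z}

/-- The field `ℚ^tr(i)`, the subfield of `ℂ` generated by all totally real numbers and `i`. -/
def QtrI : Subfield ℂ := Subfield.closure (QtrSet ∪ {Complex.I})


open Polynomial
private lemma multiset_prod_le_one {s : Multiset ℝ} (h : ∀ x ∈ s, 0 ≤ x ∧ x ≤ 1) :
    s.prod ≤ 1 := by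
  induction s using Multiset.induction with
  | empty => simp
  | cons a s ih =>
    rw [Multiset.prod_cons]
    have ha := h a (Multiset.mem_cons_self a s)
    have hs : ∀ x ∈ s, 0 ≤ x ∧ x ≤ 1 := fun x hx => h x (Multiset.mem_cons_of_mem hx)
    have hsp : s.prod ≤ 1 := ih hs
    have hsp0 : 0 ≤ s.prod := Multiset.prod_nonneg fun x hx => (hs x hx).1
    calc a * s.prod ≤ 1 * 1 := by
          apply mul_le_mul ha.2 hsp hsp0 zero_le_one
      _ = 1 := by ring

private lemma aux_abs_eq_one {K : Type*} [Field K] [NumberField K] (x : K)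
    (hx : IsIntegral ℤ x)
    (hb : ∀ φ : K →+* ℂ, ‖φ x‖ ≤ 1) (φ₀ : K →+* ℂ) :
    x = 0 ∨ ‖φ₀ x‖ = 1 := by
  by_cases hx0 : x = 0
  · exact Or.inl hx0
  right
  have hxQ : IsIntegral ℚ x := hx.tower_top
  set p := minpoly ℚ x with hpdef
  have hc0 : p.coeff 0 ≠ 0 := fun hc => hx0 ((minpoly.coeff_zero_eq_zero hxQ).mp hc)
  -- constant coefficient is an integer
  have hgauss : p = (minpoly ℤ x).map (algebraMap ℤ ℚ) :=
    minpoly.isIntegrallyClosed_eq_field_fractions' ℚ hx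
  set c : ℤ := (minpoly ℤ x).coeff 0 with hcdef
  have hpc : p.coeff 0 = (c : ℚ) := by rw [hgauss, Polynomial.coeff_map]; rfl
  have hcne : c ≠ 0 := by
    intro hcc; apply hc0; rw [hpc, hcc]; norm_num
  have hcabs : (1 : ℝ) ≤ |(c : ℝ)| := by
    have : (1 : ℤ) ≤ |c| := Int.one_le_abs hcne
    calc (1:ℝ) ≤ (|c| : ℤ) := by exact_mod_cast this
      _ = |(c : ℝ)| := by push_cast; rfl
  -- the mapped polynomial over ℂ
  set P : ℂ[X] := p.map (algebraMap ℚ ℂ) with hPdef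
  have hpmonic : p.Monic := minpoly.monic hxQ
  have hPmonic : P.Monic := hpmonic.map _
  have hPsplits : P.Splits := IsAlgClosed.splits P
  have hprod := hPsplits.coeff_zero_eq_prod_roots_of_monic hPmonic
  -- |P.coeff 0| = 1-bounded product of roots
  have hP0 : P.coeff 0 = (c : ℂ) := by
    rw [hPdef, Polynomial.coeff_map, hpc]; simp
  have habsP0 : ‖P.coeff 0‖ = |(c : ℝ)| := by
    rw [hP0, Complex.norm_intCast]
  -- every root has abs ≤ 1
  have hroot_le : ∀ z ∈ P.roots, ‖z‖ ≤ 1 := by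
    intro z hz
    have hzset : z ∈ p.rootSet ℂ := by
      rw [Polynomial.mem_rootSet']
      refine ⟨hPmonic.ne_zero, ?_⟩
      rw [Polynomial.aeval_def, ← Polynomial.eval_map]
      exact Polynomial.isRoot_of_mem_roots hz
    obtain ⟨φ, rfl⟩ := (NumberField.Embeddings.range_eval_eq_rootSet_minpoly K ℂ x).symm.subset hzset
    exact hb φ
  -- abs of product
  have habsprod : (P.roots.map (‖·‖)).prod = ‖P.roots.prod‖ := by
    exact (map_multiset_prod (normHom : ℂ →*₀ ℝ) _).symm
  have hone_le : (1 : ℝ) ≤ (P.roots.map (‖·‖)).prod := by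
    rw [habsprod]
    calc (1:ℝ) ≤ |(c:ℝ)| := hcabs
      _ = ‖P.coeff 0‖ := habsP0.symm
      _ = ‖(-1) ^ P.natDegree * P.roots.prod‖ := by rw [hprod]
      _ = ‖P.roots.prod‖ := by
          rw [norm_mul, norm_pow, norm_neg, norm_one, one_pow, one_mul]
  -- φ₀ x is a root
  have hmem : ‖φ₀ x‖ ∈ P.roots.map (‖·‖) := by
    apply Multiset.mem_map_of_mem
    rw [Polynomial.mem_roots hPmonic.ne_zero]
    have : φ₀ x ∈ p.rootSet ℂ := by
      rw [← NumberField.Embeddings.range_eval_eq_rootSet_minpoly K ℂ x]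
      exact ⟨φ₀, rfl⟩
    rw [Polynomial.mem_rootSet'] at this
    show eval (φ₀ x) (p.map (algebraMap ℚ ℂ)) = 0
    rw [Polynomial.eval_map, ← Polynomial.aeval_def]
    exact this.2
  set t := ‖φ₀ x‖ with htdef
  have ht1 : t ≤ 1 := hb φ₀
  have ht0 : 0 ≤ t := norm_nonneg _
  -- split the product
  obtain ⟨s, hs⟩ := Multiset.exists_cons_of_mem hmem
  have hrest : s.prod ≤ 1 := by
    apply multiset_prod_le_one
    intro y hy
    have hy' : y ∈ P.roots.map (‖·‖) := by rw [hs]; exact Multiset.mem_cons_of_mem hy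
    obtain ⟨z, hz, rfl⟩ := Multiset.mem_map.mp hy'
    exact ⟨norm_nonneg z, hroot_le z hz⟩
  have : (1:ℝ) ≤ t * s.prod := by rw [← Multiset.prod_cons, ← hs]; exact hone_le
  have : (1:ℝ) ≤ t := by
    calc (1:ℝ) ≤ t * s.prod := this
      _ ≤ t * 1 := mul_le_mul_of_nonneg_left hrest ht0
      _ = t := mul_one t
  linarith

private lemma real_pow_eq_one {r : ℝ} (h0 : 0 ≤ r) {n : ℕ} (hn : n ≠ 0) (h : r ^ n = 1) :
    r = 1 := by
  rcases lt_trichotomy r 1 with hl | he | hg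
  · have := pow_lt_one₀ h0 hl hn; linarith
  · exact he
  · have := one_lt_pow₀ hg hn; linarith


private lemma endgame_re_im {r i jr mr : ℝ} (hjr : 1 ≤ jr) (hmj : 1 + jr = mr)
    (e1 : r * r + i * i = 1) (e2 : (r - jr) * (r - jr) + i * i = mr * mr) :
    r = -1 ∧ i = 0 := by
  have hzero : jr * (r + 1) = 0 := by nlinarith
  have hr : r = -1 := by
    rcases mul_eq_zero.mp hzero with hj' | hr'
    · linarith
    · linarith
  refine ⟨hr, ?_⟩
  nlinarith [hr]

/-- For `L ⊆ ℂ` algebraic over `ℚ` and `m ≥ 2`, the only roots of unity in `R_{m,L}`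
are `±1`. -/
theorem rootsOfUnity_Rset (L : Subfield ℂ) (halg : ∀ x : L, IsAlgebraic ℚ (x : ℂ))
    (m : ℕ) (hm : 2 ≤ m) (ζ : ℂ) (hζ : ζ ∈ Rset m L)
    (n : ℕ) (hn : 1 ≤ n) (h : ζ ^ n = 1) :
    ζ = 1 ∨ ζ = -1 := by
  obtain ⟨⟨hζL, hζint⟩, a, ⟨haL, haint⟩, j, hj0, hjm, hx⟩ := hζ
  have hn0 : n ≠ 0 := by omega
  have hm0 : (0:ℝ) < m := by positivity
  have hmC : (m : ℂ) ≠ 0 := Nat.cast_ne_zero.mpr (by omega)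
  -- |ζ| = 1
  have habsζ : ‖ζ‖ = 1 := by
    refine real_pow_eq_one (norm_nonneg ζ) hn0 ?_
    rw [← norm_pow, h, norm_one]
  -- ζ is integral over ℚ
  have hζQ : IsIntegral ℚ ζ := hζint.tower_top
  -- the number field K = ℚ(ζ)
  set K : IntermediateField ℚ ℂ := IntermediateField.adjoin ℚ {ζ} with hK
  haveI : FiniteDimensional ℚ K := IntermediateField.adjoin.finiteDimensional hζQ
  haveI : NumberField K := ⟨⟩
  have hζmem : ζ ∈ K := IntermediateField.mem_adjoin_simple_self ℚ ζ
  have haval : a = (ζ - (j : ℂ)) / (m : ℂ) := by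
    field_simp [hx]
    rw [hx]; ring
  have hamem : a ∈ K := by
    rw [haval]
    exact div_mem (sub_mem hζmem (IntermediateField.intCast_mem K j))
      (IntermediateField.natCast_mem K m)
  set ζK : K := ⟨ζ, hζmem⟩ with hζKdef
  set aK : K := ⟨a, hamem⟩ with haKdef
  have haKint : IsIntegral ℤ aK := by
    rwa [← isIntegral_algebraMap_iff (algebraMap K ℂ).injective]
  -- in K : m * aK = ζK - j
  have hkey : (m : K) * aK = ζK - (j : K) := by
    apply Subtype.ext
    push_cast
    show (m : ℂ) * a = ζ - (j : ℂ)
    rw [hx]; ring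
  have hζKpow : ζK ^ n = 1 := by
    apply Subtype.ext
    push_cast
    exact h
  -- bound on embeddings
  have hb : ∀ φ : K →+* ℂ, ‖φ aK‖ ≤ 1 := by
    intro φ
    have h1 : (m : ℂ) * φ aK = φ ζK - (j : ℂ) := by
      have := congrArg φ hkey
      rwa [map_mul, map_natCast, map_sub, map_intCast] at this
    have h2 : ‖φ ζK‖ = 1 := by
      refine real_pow_eq_one (norm_nonneg _) hn0 ?_
      rw [← norm_pow, ← map_pow, hζKpow, map_one, norm_one]
    have h3 : (m : ℝ) * ‖φ aK‖ = ‖φ ζK - (j : ℂ)‖ := by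
      rw [← h1, norm_mul, Complex.norm_natCast]
    have h4 : ‖φ ζK - (j : ℂ)‖ ≤ 1 + (j : ℝ) := by
      calc ‖φ ζK - (j : ℂ)‖ ≤ ‖φ ζK‖ + ‖(j : ℂ)‖ :=
            (norm_sub_le _ _)
        _ = 1 + |(j:ℝ)| := by rw [h2, Complex.norm_intCast]
        _ = 1 + (j : ℝ) := by
            have : (0:ℝ) ≤ (j:ℝ) := by exact_mod_cast hj0
            rw [_root_.abs_of_nonneg this]
    have h5 : (1 : ℝ) + (j : ℝ) ≤ (m : ℝ) := by
      have : j + 1 ≤ (m : ℤ) := hjm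
      have : ((j:ℝ) + 1) ≤ (m:ℝ) := by exact_mod_cast this
      linarith
    have h6 : (m:ℝ) * ‖φ aK‖ ≤ m := by
      calc (m:ℝ) * ‖φ aK‖ = ‖φ ζK - (j:ℂ)‖ := h3
        _ ≤ 1 + (j:ℝ) := h4
        _ ≤ m := h5
    have := (mul_le_iff_le_one_right hm0).mp (by rwa [mul_comm] at h6)
    linarith [this]
  -- apply the key lemma with the inclusion embedding
  rcases aux_abs_eq_one aK haKint hb (K.val.toRingHom) with h0 | h1a
  · -- a = 0, so ζ = j and then j = 1
    have ha0 : a = 0 := by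
      have := congrArg (Subtype.val) h0
      simpa [haKdef] using this
    have hζj : ζ = (j:ℂ) := by rw [hx, ha0]; ring
    left
    have habj : |(j:ℝ)| = 1 := by
      rw [← Complex.norm_intCast, ← hζj]; exact habsζ
    have hj1 : j = 1 := by
      have h0r : (0:ℝ) ≤ (j:ℝ) := by exact_mod_cast hj0
      have : (j:ℝ) = 1 := by rwa [_root_.abs_of_nonneg h0r] at habj
      exact_mod_cast this
    rw [hζj, hj1]; norm_num
  · -- |a| = 1
    right
    have haabs : ‖a‖ = 1 := h1a
    have hd : ‖ζ - (j:ℂ)‖ = m := by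
      have hz : ζ - (j:ℂ) = (m:ℂ) * a := by rw [hx]; ring
      rw [hz, norm_mul, Complex.norm_natCast, haabs, mul_one]
    have h4 : ‖ζ - (j:ℂ)‖ ≤ 1 + (j : ℝ) := by
      calc ‖ζ - (j:ℂ)‖ ≤ ‖ζ‖ + ‖(j : ℂ)‖ :=
            (norm_sub_le _ _)
        _ = 1 + |(j:ℝ)| := by rw [habsζ, Complex.norm_intCast]
        _ = 1 + (j : ℝ) := by
            have : (0:ℝ) ≤ (j:ℝ) := by exact_mod_cast hj0
            rw [_root_.abs_of_nonneg this]
    have h5 : (1 : ℝ) + (j : ℝ) ≤ (m : ℝ) := by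
      have : j + 1 ≤ (m : ℤ) := hjm
      have : ((j:ℝ) + 1) ≤ (m:ℝ) := by exact_mod_cast this
      linarith
    have hmj : (1:ℝ) + (j:ℝ) = (m:ℝ) := by
      rw [hd] at h4; linarith
    have hjr : (1:ℝ) ≤ (j:ℝ) := by
      have : (2:ℝ) ≤ (m:ℝ) := by exact_mod_cast hm
      linarith
    -- compute with real and imaginary parts
    have e1 : ζ.re * ζ.re + ζ.im * ζ.im = 1 := by
      have := Complex.sq_norm ζ
      rw [habsζ] at this
      simpa [Complex.normSq_apply] using this.symm
    have e2 : (ζ.re - (j:ℝ)) * (ζ.re - (j:ℝ)) + ζ.im * ζ.im = (m:ℝ) * (m:ℝ) := by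
      have := Complex.sq_norm (ζ - (j:ℂ))
      rw [hd] at this
      have h' : (m:ℝ) * (m:ℝ) = Complex.normSq (ζ - (j:ℂ)) := by
        rw [← this]; ring
      rw [h']
      simp [Complex.normSq_apply]
    obtain ⟨hre, him⟩ := endgame_re_im hjr hmj e1 e2
    apply Complex.ext
    · simpa using hre
    · simpa using him


end
end

section
/- Let L be a totally imaginary quadratic extension of the totally real field K, and let O ⊆ O_L be a subring that is closed under complex conjugation. Then for every unit u of O there is a root of unity ζ ∈ μ(O) such that the complex conjugate of u equals ζ·u. -/
open Complex

noncomputable section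

section AuxCM

set_option maxHeartbeats 1000000
set_option synthInstance.maxHeartbeats 400000

variable {K L : Subfield ℂ}

lemma im_eq_zero_of_mem_K (h : IsTIQExt K L) {a : ℂ} (ha : a ∈ K) : a.im = 0 := by
  simpa using h.tot_real K.subtype ⟨a, ha⟩

lemma conj_eq_of_mem_K (h : IsTIQExt K L) {a : ℂ} (ha : a ∈ K) : (starRingEnd ℂ) a = a :=
  Complex.conj_eq_iff_im.2 (im_eq_zero_of_mem_K h ha)

lemma exists_delta (h : IsTIQExt K L) :
    ∃ δ : ℂ, δ ∈ L ∧ (starRingEnd ℂ) δ = -δ ∧ δ ≠ 0 ∧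
      ∀ x ∈ L, ∃ a ∈ K, ∃ b ∈ K, x = a + b * δ := by
  letI := (Subfield.inclusion h.le).toAlgebra
  obtain ⟨x₀, hx₀⟩ := h.tot_imaginary L.subtype
  have hx₀' : ((x₀ : ℂ)).im ≠ 0 := hx₀
  set δ : ℂ := (x₀ : ℂ) - (starRingEnd ℂ) (x₀ : ℂ) with hδdef
  have hδL : δ ∈ L := L.sub_mem x₀.2 (h.conj_closed _ x₀.2)
  have hδconj : (starRingEnd ℂ) δ = -δ := by
    simp only [hδdef, map_sub, Complex.conj_conj]; ring
  have hδim : δ.im = 2 * ((x₀ : ℂ)).im := by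
    simp only [hδdef, Complex.sub_im, Complex.conj_im]; ring
  have hδre : δ.re = 0 := by
    have := congrArg Complex.re hδconj
    simp only [Complex.conj_re, Complex.neg_re] at this
    linarith
  have hδim' : δ.im ≠ 0 := by
    rw [hδim]; intro hc; apply hx₀'; linarith
  have hδne : δ ≠ 0 := by
    intro hc; apply hδim'; rw [hc]; simp
  set δL : L := ⟨δ, hδL⟩ with hδLdef
  have hfin : Module.finrank K L = 2 := h.deg
  haveI : FiniteDimensional K L := FiniteDimensional.of_finrank_eq_succ hfin
  have coe_smul : ∀ (s : K) (x : L), ((s • x : L) : ℂ) = (s : ℂ) * (x : ℂ) :=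
    fun s x => rfl
  have hli : LinearIndependent K ![(1 : L), δL] := by
    rw [LinearIndependent.pair_iff]
    intro s t hst
    have hC : (s : ℂ) + (t : ℂ) * δ = 0 := by
      have := congrArg (fun z : L => (z : ℂ)) hst
      simpa [coe_smul] using this
    have hs0 : ((s : ℂ)).im = 0 := im_eq_zero_of_mem_K h s.2
    have ht0 : ((t : ℂ)).im = 0 := im_eq_zero_of_mem_K h t.2
    have hre : (s : ℂ).re + ((t : ℂ).re * δ.re - (t : ℂ).im * δ.im) = 0 := by
      have := congrArg Complex.re hC
      simpa only [Complex.add_re, Complex.mul_re, Complex.zero_re] using this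
    have him : (s : ℂ).im + ((t : ℂ).re * δ.im + (t : ℂ).im * δ.re) = 0 := by
      have := congrArg Complex.im hC
      simpa only [Complex.add_im, Complex.mul_im, Complex.zero_im] using this
    simp only [hδre, ht0, hs0, mul_zero, zero_mul, sub_zero, add_zero, zero_add] at hre him
    have htre : ((t : ℂ)).re = 0 := by
      rcases mul_eq_zero.1 him with h' | h'
      · exact h'
      · exact absurd h' hδim'
    have hsre : ((s : ℂ)).re = 0 := hre
    exact ⟨Subtype.ext (Complex.ext hsre hs0), Subtype.ext (Complex.ext htre ht0)⟩
  have hsp : Submodule.span K ({(1 : L), δL} : Set L) = ⊤ := by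
    apply Submodule.eq_top_of_finrank_eq
    rw [hfin]
    have hcard := finrank_span_eq_card hli
    rw [Matrix.range_cons_cons_empty] at hcard
    simpa using hcard
  refine ⟨δ, hδL, hδconj, hδne, ?_⟩
  intro x hx
  have hmem : (⟨x, hx⟩ : L) ∈ Submodule.span K ({(1 : L), δL} : Set L) := by
    rw [hsp]; trivial
  obtain ⟨a, b, hab⟩ := Submodule.mem_span_pair.1 hmem
  refine ⟨(a : ℂ), a.2, (b : ℂ), b.2, ?_⟩
  simpa [coe_smul] using (congrArg (fun z : L => (z : ℂ)) hab).symm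

lemma conj_sigma_comm (h : IsTIQExt K L) (σ : (↥L) →+* ℂ) (x : L) :
    (starRingEnd ℂ) (σ x) = σ ⟨(starRingEnd ℂ) (x : ℂ), h.conj_closed _ x.2⟩ := by
  obtain ⟨δ, hδL, hδc, hδne, hdec⟩ := exists_delta h
  set δL : L := ⟨δ, hδL⟩ with hδLdef
  have hK : ∀ (a : ℂ) (ha : a ∈ K), (σ ⟨a, h.le ha⟩).im = 0 := by
    intro a ha
    exact h.tot_real (σ.comp (Subfield.inclusion h.le)) ⟨a, ha⟩
  -- δ² ∈ K
  obtain ⟨a, haK, b, hbK, habe⟩ := hdec (δ * δ) (L.mul_mem hδL hδL)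
  have hbzero : b = 0 := by
    have h1 : (starRingEnd ℂ) (δ * δ) = δ * δ := by
      rw [map_mul, hδc]; ring
    have h2 : (starRingEnd ℂ) (a + b * δ) = a - b * δ := by
      rw [map_add, map_mul, hδc, conj_eq_of_mem_K h haK, conj_eq_of_mem_K h hbK]; ring
    rw [habe, h2] at h1
    have : b * δ = 0 := by linear_combination (-1/2 : ℂ) * h1
    rcases mul_eq_zero.1 this with h' | h'
    · exact h'
    · exact absurd h' hδne
  have hδsq : δ * δ = a := by rw [habe, hbzero]; ring
  have hδLsq : δL * δL = ⟨a, h.le haK⟩ := Subtype.ext hδsq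
  have hsqim : ((σ δL) * (σ δL)).im = 0 := by
    rw [← map_mul, hδLsq]; exact hK a haK
  have hcases : (starRingEnd ℂ) (σ δL) = σ δL ∨ (starRingEnd ℂ) (σ δL) = -(σ δL) := by
    apply mul_self_eq_mul_self_iff.1
    rw [← map_mul, Complex.conj_eq_iff_im.2 hsqim]
  have hσδ : (starRingEnd ℂ) (σ δL) = -(σ δL) := by
    rcases hcases with hc | hc
    · exfalso
      have hδim0 : (σ δL).im = 0 := Complex.conj_eq_iff_im.1 hc
      obtain ⟨y, hy⟩ := h.tot_imaginary σ
      obtain ⟨p, hpK, q, hqK, hpq⟩ := hdec (y : ℂ) y.2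
      have hyL : y = ⟨p, h.le hpK⟩ + ⟨q, h.le hqK⟩ * δL := Subtype.ext hpq
      apply hy
      rw [hyL, map_add, map_mul]
      simp [Complex.add_im, Complex.mul_im, hK p hpK, hK q hqK, hδim0]
    · exact hc
  obtain ⟨p, hpK, q, hqK, hpq⟩ := hdec (x : ℂ) x.2
  have hyL : x = ⟨p, h.le hpK⟩ + ⟨q, h.le hqK⟩ * δL := Subtype.ext hpq
  have hconjx : (starRingEnd ℂ) (x : ℂ) = p - q * δ := by
    rw [hpq, map_add, map_mul, hδc, conj_eq_of_mem_K h hpK, conj_eq_of_mem_K h hqK]; ring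
  have hconjxL : (⟨(starRingEnd ℂ) (x : ℂ), h.conj_closed _ x.2⟩ : L)
      = ⟨p, h.le hpK⟩ - ⟨q, h.le hqK⟩ * δL := Subtype.ext (by exact hconjx)
  calc (starRingEnd ℂ) (σ x)
      = (starRingEnd ℂ) (σ ⟨p, h.le hpK⟩ + σ ⟨q, h.le hqK⟩ * σ δL) := by
        rw [hyL, map_add, map_mul]
    _ = σ ⟨p, h.le hpK⟩ - σ ⟨q, h.le hqK⟩ * σ δL := by
        rw [map_add, map_mul, Complex.conj_eq_iff_im.2 (hK p hpK),
          Complex.conj_eq_iff_im.2 (hK q hqK), hσδ]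
        ring
    _ = σ (⟨p, h.le hpK⟩ - ⟨q, h.le hqK⟩ * δL) := by rw [map_sub, map_mul]
    _ = σ ⟨(starRingEnd ℂ) (x : ℂ), h.conj_closed _ x.2⟩ := by rw [hconjxL]

end AuxCM

set_option maxHeartbeats 1600000 in
set_option synthInstance.maxHeartbeats 800000 in
/-- Let `L` be a totally imaginary quadratic extension of the totally real field `K`, and let
`O ⊆ O_L` be a subring closed under complex conjugation. Then for every unit `u` of `O` there is
a root of unity `ζ ∈ μ(O)` with `conj u = ζ · u`. -/
theorem conj_unit_eq_rootOfUnity_mul (K L : Subfield ℂ) (h : IsTIQExt K L)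
    (O : Subring ℂ) (hOL : O ≤ ringOfInt L)
    (hOconj : ∀ x ∈ O, (starRingEnd ℂ) x ∈ O) (u : Oˣ) :
    ∃ ζ ∈ O, (∃ n : ℕ, 1 ≤ n ∧ ζ ^ n = 1) ∧
      (starRingEnd ℂ) (((u : O) : ℂ)) = ζ * ((u : O) : ℂ) := by
  set uC : ℂ := ((u : O) : ℂ) with huC
  set vC : ℂ := (((u⁻¹ : Oˣ) : O) : ℂ) with hvC
  have huv : uC * vC = 1 := by
    have h1 : ((u : O) : ℂ) * (((u⁻¹ : Oˣ) : O) : ℂ) = ((((u * u⁻¹ : Oˣ) : O)) : ℂ) := by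
      push_cast; ring
    rw [huC, hvC, h1, mul_inv_cancel]
    norm_num
  set ζ : ℂ := (starRingEnd ℂ) uC * vC with hζdef
  have hζO : ζ ∈ O := O.mul_mem (hOconj _ (u : O).2) ((u⁻¹ : Oˣ) : O).2
  have hconj : (starRingEnd ℂ) uC = ζ * uC := by
    rw [hζdef]
    calc (starRingEnd ℂ) uC = (starRingEnd ℂ) uC * (uC * vC) := by rw [huv]; ring
    _ = (starRingEnd ℂ) uC * vC * uC := by ring
  have hconjuv : (starRingEnd ℂ) uC * (starRingEnd ℂ) vC = 1 := by
    rw [← map_mul, huv, map_one]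
  have hζζ : ζ * (starRingEnd ℂ) ζ = 1 := by
    have e : ζ * (starRingEnd ℂ) ζ
        = (uC * vC) * ((starRingEnd ℂ) uC * (starRingEnd ℂ) vC) := by
      simp only [hζdef, map_mul, Complex.conj_conj]; ring
    rw [e, huv, hconjuv, one_mul]
  have hζL : ζ ∈ L := (hOL hζO).1
  have hζint : IsIntegral ℤ ζ := (hOL hζO).2
  set ζL : L := ⟨ζ, hζL⟩ with hζLdef
  have hLalg : ∀ z : L, IsAlgebraic ℚ z := by
    intro z
    have := h.alg z
    exact (isAlgebraic_algHom_iff L.subtype.toRatAlgHom Subtype.val_injective).mp this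
  haveI : Algebra.IsAlgebraic ℚ (↥L) := ⟨fun z => hLalg z⟩
  set F : IntermediateField ℚ (↥L) := IntermediateField.adjoin ℚ {ζL} with hFdef
  haveI : FiniteDimensional ℚ F :=
    IntermediateField.adjoin.finiteDimensional (hLalg ζL).isIntegral
  haveI : NumberField F := ⟨⟩
  set ζF : F := ⟨ζL, IntermediateField.mem_adjoin_simple_self ℚ ζL⟩ with hζFdef
  set g : F →+* ℂ := L.subtype.comp (algebraMap F (↥L)) with hgdef
  have hginj : Function.Injective g :=
    Subtype.val_injective.comp (IntermediateField.val F).injective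
  have hgζ : g ζF = ζ := rfl
  have hintF : IsIntegral ℤ ζF := by
    have : IsIntegral ℤ (g.toIntAlgHom ζF) := by
      rw [RingHom.toIntAlgHom_apply, hgζ]; exact hζint
    exact (isIntegral_algHom_iff g.toIntAlgHom hginj).mp this
  have hnorm : ∀ φ : F →+* ℂ, ‖φ ζF‖ = 1 := by
    intro φ
    haveI : Algebra.IsAlgebraic (↥F) (↥L) :=
      Algebra.IsAlgebraic.tower_top (K := ℚ) (L := ↥F)
    obtain ⟨σA, hσA⟩ := IsAlgClosed.surjective_restrictDomain_of_isAlgebraic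
      (K := ℚ) (L := ↥F) (M := ℂ) (E := ↥L) φ.toRatAlgHom
    have hσζ : σA ζL = φ ζF := by
      have h1 := congrArg (fun ψ : (↥F) →ₐ[ℚ] ℂ => ψ ζF) hσA
      exact h1
    have hcm := conj_sigma_comm h σA.toRingHom ζL
    have hprodL : (ζL * ⟨(starRingEnd ℂ) ζ, h.conj_closed _ hζL⟩ : ↥L) = 1 :=
      Subtype.ext hζζ
    have hprod : σA ζL * (starRingEnd ℂ) (σA ζL) = 1 := by
      have : (starRingEnd ℂ) (σA.toRingHom ζL)
          = σA.toRingHom ⟨(starRingEnd ℂ) (ζL : ℂ), h.conj_closed _ ζL.2⟩ := hcm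
      rw [show (starRingEnd ℂ) (σA ζL) = σA.toRingHom ⟨(starRingEnd ℂ) (ζL : ℂ),
        h.conj_closed _ ζL.2⟩ from this]
      rw [show σA ζL = σA.toRingHom ζL from rfl, ← map_mul]
      rw [show (ζL * ⟨(starRingEnd ℂ) (ζL : ℂ), h.conj_closed _ ζL.2⟩ : ↥L) = 1 from hprodL]
      exact map_one _
    have hns : Complex.normSq (σA ζL) = 1 := by
      have := hprod
      rw [Complex.mul_conj] at this
      exact_mod_cast this
    have hn2 : ‖σA ζL‖ ^ 2 = 1 := by
      rw [Complex.sq_norm, hns]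
    have : ‖σA ζL‖ = 1 := by nlinarith [norm_nonneg (σA ζL)]
    rw [← hσζ]; exact this
  obtain ⟨n, hn0, hζn⟩ :=
    NumberField.Embeddings.pow_eq_one_of_norm_eq_one (K := F) ℂ hintF hnorm
  refine ⟨ζ, hζO, ⟨n, hn0, ?_⟩, hconj⟩
  have := congrArg g hζn
  rw [map_pow, hgζ, map_one] at this
  exact this


end
end

section
/- Let L be a totally imaginary quadratic extension of the totally real field K. Then for every unit u of the ring R_{2,L}, the square u² lies in K; moreover u² belongs to R_{2,K} and is a unit of R_{2,K}. In short, (R_{2,L}ˣ)² ⊆ R_{2,K}ˣ. -/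
open Complex

noncomputable section

/-!
Write a unit of `R_{2,L}` as `u = 1 + 2a` with `a ∈ O_L` and put `ζ = u / ū = u · conj (u⁻¹)`.
Since `L` is a CM field, every embedding `σ : L → ℂ` commutes with complex conjugation, so
`|σ ζ| = 1`; moreover `ζ = 1 + 2β` with `β = (a - ā) · conj (u⁻¹) ∈ O_L`. Unless `ζ = -1`,
this forces `|σ β| = |σ ζ - 1| / 2 < 1` for all `σ`, hence `β = 0`. So `ζ = ±1`, i.e. `u² = ū²`
is real, and the real elements of `L` are exactly those of `K`. Finally
`u² = 1 + 2 · 2(a + a²)` with `2(a + a²) = (u² - 1) / 2 ∈ K`, so `u² ∈ R_{2,K}`.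
-/

theorem Subfield.algebraIsAlgebraic_of_forall {L : Subfield ℂ}
    (halg : ∀ x : L, IsAlgebraic ℚ (x : ℂ)) : Algebra.IsAlgebraic ℚ L :=
  ⟨fun x => (isAlgebraic_algHom_iff L.subtype.toRatAlgHom Subtype.val_injective).mp (halg x)⟩

open IntermediateField in
theorem exists_conjugate_one_le_norm_of_isAlgebraic {L : Type*} [Field L] [CharZero L]
    [Algebra.IsAlgebraic ℚ L] {β : L} (hβ : IsIntegral ℤ β) (hβ0 : β ≠ 0) :
    ∃ σ : L →+* ℂ, 1 ≤ ‖σ β‖ := by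
  have : FiniteDimensional ℚ ℚ⟮β⟯ := adjoin.finiteDimensional (Algebra.IsIntegral.isIntegral β)
  have : NumberField ℚ⟮β⟯ := ⟨⟩
  let β' : NumberField.RingOfIntegers ℚ⟮β⟯ := ⟨AdjoinSimple.gen ℚ β,
    (isIntegral_algHom_iff (ℚ⟮β⟯).val.toIntAlgHom Subtype.val_injective).mp hβ⟩
  have hβ'0 : β' ≠ 0 := fun h =>
    hβ0 (congrArg (fun x : NumberField.RingOfIntegers ℚ⟮β⟯ => ((x : ℚ⟮β⟯) : L)) h)
  obtain ⟨σ, hσ⟩ := NumberField.exists_conjugate_one_le_norm hβ'0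
  obtain ⟨φ, hφ⟩ := exists_algHom_of_splits
    (fun x : L => ⟨Algebra.IsIntegral.isIntegral x, IsAlgClosed.splits _⟩) σ.toRatAlgHom
  exact ⟨φ, (congrArg (‖·‖) (DFunLike.congr_fun hφ (AdjoinSimple.gen ℚ β))).symm ▸ hσ⟩

theorem norm_sub_one_lt_two {z : ℂ} (hz : ‖z‖ = 1) (hz1 : z ≠ -1) : ‖z - 1‖ < 2 := by
  have hray : ¬SameRay ℝ z (-1) := (not_sameRay_iff_of_norm_eq (by simp [hz])).mpr hz1
  simpa [sub_eq_add_neg, hz, one_add_one_eq_two] using norm_add_lt_of_not_sameRay hray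

theorem eq_one_or_eq_neg_one_of_norm_embedding_eq_one {L : Type*} [Field L] [CharZero L]
    [Algebra.IsAlgebraic ℚ L] {ζ β : L} (hβ : IsIntegral ℤ β) (hζ : ζ = 1 + 2 * β)
    (hnorm : ∀ σ : L →+* ℂ, ‖σ ζ‖ = 1) : ζ = 1 ∨ ζ = -1 := by
  refine or_iff_not_imp_right.mpr fun hζ1 => ?_
  suffices β = 0 by simp [hζ, this]
  by_contra hβ0
  obtain ⟨σ, hσ⟩ := exists_conjugate_one_le_norm_of_isAlgebraic hβ hβ0
  have hne : σ ζ ≠ -1 := fun h => hζ1 (σ.injective (by simpa using h))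
  have hlt := norm_sub_one_lt_two (hnorm σ) hne
  rw [hζ, map_add, map_mul, map_one, map_ofNat, add_sub_cancel_left, norm_mul] at hlt
  norm_num at hlt
  linarith

theorem not_isIntegral_inv_two : ¬ IsIntegral ℤ (2⁻¹ : ℂ) := by
  rw [show (2⁻¹ : ℂ) = algebraMap ℚ ℂ 2⁻¹ by simp,
    isIntegral_algebraMap_iff (algebraMap ℚ ℂ).injective, IsIntegrallyClosed.isIntegral_iff]
  rintro ⟨n, hn⟩
  have : ((n * 2 : ℤ) : ℚ) = 1 := by simp_all
  have : n * 2 = 1 := by exact_mod_cast this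
  omega

theorem isIntegral_of_mem_ringOfInt {L : Subfield ℂ} {x : ℂ} (hx : x ∈ ringOfInt L) :
    IsIntegral ℤ (⟨x, hx.1⟩ : L) :=
  (isIntegral_algHom_iff L.subtype.toIntAlgHom Subtype.val_injective).mp hx.2

theorem conj_mem_ringOfInt {L : Subfield ℂ} (hc : ∀ x ∈ L, starRingEnd ℂ x ∈ L) {x : ℂ}
    (hx : x ∈ ringOfInt L) : starRingEnd ℂ x ∈ ringOfInt L :=
  ⟨hc x hx.1, hx.2.map (starRingEnd ℂ).toIntAlgHom⟩

namespace Rring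

theorem coe_mul_coe_inv {m : ℕ} {hm : m ≠ 0} {L : Subfield ℂ} (u : (Rring m hm L)ˣ) :
    ((u : Rring m hm L) : ℂ) * ((u⁻¹ : (Rring m hm L)ˣ) : Rring m hm L) = 1 := by
  exact_mod_cast congrArg Subtype.val u.mul_inv

theorem exists_eq_one_add_two_mul {L : Subfield ℂ} (u : (Rring 2 twoNZ L)ˣ) :
    ∃ a ∈ ringOfInt L, ((u : Rring 2 twoNZ L) : ℂ) = 1 + 2 * a := by
  obtain ⟨-, a, ha, j, hj0, hj2, hua⟩ := (u : Rring 2 twoNZ L).2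
  interval_cases j
  · have hw := ((u⁻¹ : (Rring 2 twoNZ L)ˣ) : Rring 2 twoNZ L).2
    have hinv : a * ((u⁻¹ : (Rring 2 twoNZ L)ˣ) : Rring 2 twoNZ L) = 2⁻¹ := by
      apply eq_inv_of_mul_eq_one_left
      have huw := coe_mul_coe_inv u
      rw [hua] at huw
      push_cast at huw
      linear_combination huw
    exact absurd (hinv ▸ ha.2.mul hw.1.2) not_isIntegral_inv_two
  · exact ⟨a, ha, by simpa using hua⟩

theorem sq_one_add_two_mul_mem {K L : Subfield ℂ} {a : ℂ} (ha : a ∈ ringOfInt L)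
    (hK : (1 + 2 * a) ^ 2 ∈ K) : (1 + 2 * a) ^ 2 ∈ Rring 2 twoNZ K := by
  have hb : 2 * (a + a ^ 2) ∈ K := by
    rw [show 2 * (a + a ^ 2) = ((1 + 2 * a) ^ 2 - 1) / 2 by ring]
    exact div_mem (sub_mem hK (one_mem K)) (ofNat_mem K 2)
  have hbO : 2 * (a + a ^ 2) ∈ ringOfInt L :=
    mul_mem (ofNat_mem _ 2) (add_mem ha (pow_mem ha 2))
  have hsqO : (1 + 2 * a) ^ 2 ∈ ringOfInt L :=
    pow_mem (add_mem (one_mem _) (mul_mem (ofNat_mem _ 2) ha)) 2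
  exact Rset_norm twoNZ ⟨hK, hsqO.2⟩ ⟨hb, hbO.2⟩ (j := 1) (by push_cast; ring)

theorem exists_units_coe_eq_sq {K L : Subfield ℂ} (u : (Rring 2 twoNZ L)ˣ)
    (hK : ((u : Rring 2 twoNZ L) : ℂ) ^ 2 ∈ K) :
    ∃ v : (Rring 2 twoNZ K)ˣ, ((v : Rring 2 twoNZ K) : ℂ) = ((u : Rring 2 twoNZ L) : ℂ) ^ 2 := by
  obtain ⟨a, ha, hua⟩ := exists_eq_one_add_two_mul u
  obtain ⟨b, hb, hub⟩ := exists_eq_one_add_two_mul u⁻¹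
  have huv := coe_mul_coe_inv u
  have hK' : (((u⁻¹ : (Rring 2 twoNZ L)ˣ) : Rring 2 twoNZ L) : ℂ) ^ 2 ∈ K := by
    rw [eq_inv_of_mul_eq_one_right huv, inv_pow]
    exact inv_mem hK
  rw [hua] at hK ⊢
  rw [hub] at hK'
  refine ⟨Units.mkOfMulEqOne ⟨_, sq_one_add_two_mul_mem ha hK⟩
    ⟨_, sq_one_add_two_mul_mem hb hK'⟩ ?_, rfl⟩
  apply Subtype.ext
  simp only [Subring.coe_mul, Subring.coe_one, ← mul_pow, ← hua, ← hub, huv, one_pow]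

end Rring

namespace Subfield

variable {L : Subfield ℂ}

def restrictConj (hc : ∀ x ∈ L, starRingEnd ℂ x ∈ L) : L →+* L :=
  ((starRingEnd ℂ).comp L.subtype).codRestrict L fun x => hc x x.2

@[simp]
theorem coe_restrictConj (hc : ∀ x ∈ L, starRingEnd ℂ x ∈ L) (x : L) :
    (restrictConj hc x : ℂ) = starRingEnd ℂ x :=
  rfl

end Subfield

open Subfield

namespace IsTIQExt

variable {K L : Subfield ℂ}

theorem restrictConj_ne_id (h : IsTIQExt K L) : restrictConj h.conj_closed ≠ RingHom.id L := by
  obtain ⟨x, hx⟩ := h.tot_imaginary L.subtype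
  intro hid
  exact hx (Complex.conj_eq_iff_im.mp (congrArg Subtype.val (RingHom.congr_fun hid x)))

theorem restrictConj_inclusion (h : IsTIQExt K L) (k : K) :
    restrictConj h.conj_closed (inclusion h.le k) = inclusion h.le k :=
  Subtype.ext (Complex.conj_eq_iff_im.mpr (h.tot_real K.subtype k))

theorem map_restrictConj (h : IsTIQExt K L) (σ : L →+* ℂ) (x : L) :
    σ (restrictConj h.conj_closed x) = starRingEnd ℂ (σ x) := by
  let : Algebra K L := (inclusion h.le).toAlgebra
  let : Algebra K ℂ := (σ.comp (inclusion h.le)).toAlgebra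
  have : FiniteDimensional K L := .of_finrank_pos (h.deg ▸ two_pos)
  -- `σ`, `σ ∘ c` and `conj ∘ σ` are `K`-embeddings of `L`, of which there are only `[L : K] = 2`.
  let τ₀ : L →ₐ[K] ℂ := { σ with commutes' := fun _ => rfl }
  let τ₁ : L →ₐ[K] ℂ :=
    { σ.comp (restrictConj h.conj_closed) with
      commutes' := fun k => congrArg σ (h.restrictConj_inclusion k) }
  let τ₂ : L →ₐ[K] ℂ :=
    { (starRingEnd ℂ).comp σ with
      commutes' := fun k =>
        Complex.conj_eq_iff_im.mpr (h.tot_real (σ.comp (inclusion h.le)) k) }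
  have h₀₁ : τ₀ ≠ τ₁ := fun hτ => h.restrictConj_ne_id <|
    RingHom.ext fun y => σ.injective (DFunLike.congr_fun hτ y).symm
  have h₀₂ : τ₀ ≠ τ₂ := by
    obtain ⟨y, hy⟩ := h.tot_imaginary σ
    exact fun hτ => hy (Complex.conj_eq_iff_im.mp (DFunLike.congr_fun hτ y).symm)
  have hcard : Fintype.card (L →ₐ[K] ℂ) = 2 := (AlgHom.card K L ℂ).trans h.deg
  by_contra hne
  have h₁₂ : τ₁ ≠ τ₂ := fun hτ => hne (DFunLike.congr_fun hτ x)
  have := Fintype.two_lt_card_iff.mpr ⟨τ₀, τ₁, τ₂, h₀₁, h₀₂, h₁₂⟩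
  omega

theorem mem_of_conj_eq_self (h : IsTIQExt K L) {x : ℂ} (hxL : x ∈ L)
    (hx : starRingEnd ℂ x = x) : x ∈ K := by
  let : Algebra K L := (inclusion h.le).toAlgebra
  let S : IntermediateField K L :=
    (RingHom.eqLocusField (restrictConj h.conj_closed) (RingHom.id L)).toIntermediateField
      h.restrictConj_inclusion
  have hxS : (⟨x, hxL⟩ : L) ∈ S := Subtype.ext hx
  rcases (IntermediateField.isSimpleOrder_of_finrank_prime K L
    (h.deg ▸ Nat.prime_two)).eq_bot_or_eq_top S with hbot | htop
  · obtain ⟨k, hk⟩ := IntermediateField.mem_bot.mp (hbot ▸ hxS)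
    have hkx : (k : ℂ) = x := congrArg Subtype.val hk
    exact hkx ▸ k.2
  · exact absurd (RingHom.ext fun y => (htop ▸ IntermediateField.mem_top : y ∈ S))
      h.restrictConj_ne_id

theorem sq_mem_of_mul_eq_one (h : IsTIQExt K L) {u v a : ℂ} (hu : u ∈ ringOfInt L)
    (hv : v ∈ ringOfInt L) (huv : u * v = 1) (ha : a ∈ ringOfInt L) (hua : u = 1 + 2 * a) :
    u ^ 2 ∈ K := by
  have := algebraIsAlgebraic_of_forall h.alg
  have hβ : (a - starRingEnd ℂ a) * starRingEnd ℂ v ∈ ringOfInt L :=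
    mul_mem (sub_mem ha (conj_mem_ringOfInt h.conj_closed ha))
      (conj_mem_ringOfInt h.conj_closed hv)
  have hconj : starRingEnd ℂ u * starRingEnd ℂ v = 1 := by rw [← map_mul, huv, map_one]
  have hcua : starRingEnd ℂ u = 1 + 2 * starRingEnd ℂ a := by
    rw [hua, map_add, map_mul, map_one, map_ofNat]
  let ζ : L := ⟨u, hu.1⟩ * restrictConj h.conj_closed ⟨v, hv.1⟩
  have hζβ : ζ = 1 + 2 * ⟨_, hβ.1⟩ := by
    apply Subtype.ext
    simp only [ζ, coe_mul, coe_restrictConj, coe_add, coe_one, show ((2 : L) : ℂ) = 2 from rfl]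
    linear_combination starRingEnd ℂ v * hua + hconj - starRingEnd ℂ v * hcua
  have hnorm (σ : L →+* ℂ) : ‖σ ζ‖ = 1 := by
    rw [map_mul, h.map_restrictConj, norm_mul, Complex.norm_conj, ← norm_mul, ← map_mul,
      show (⟨u, hu.1⟩ * ⟨v, hv.1⟩ : L) = 1 from Subtype.ext huv, map_one, norm_one]
  refine h.mem_of_conj_eq_self (pow_mem hu.1 2) ?_
  rw [map_pow]
  rcases eq_one_or_eq_neg_one_of_norm_embedding_eq_one (isIntegral_of_mem_ringOfInt hβ) hζβ
    hnorm with hζ | hζ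
  · have hs : u * starRingEnd ℂ v = 1 := congrArg Subtype.val hζ
    linear_combination (u + starRingEnd ℂ u) * (u * hconj - starRingEnd ℂ u * hs)
  · have hs : u * starRingEnd ℂ v = -1 := congrArg Subtype.val hζ
    linear_combination (u - starRingEnd ℂ u) * (u * hconj - starRingEnd ℂ u * hs)

end IsTIQExt

/-- Let `L` be a totally imaginary quadratic extension of the totally real field `K`. Then for
every unit `u` of `R_{2,L}`, the square `u²` lies in `K`, belongs to `R_{2,K}`, and is a unit of
`R_{2,K}`: in short, `(R_{2,L}ˣ)² ⊆ R_{2,K}ˣ`. -/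
theorem sq_unit_mem (K L : Subfield ℂ) (h : IsTIQExt K L) (u : (Rring 2 twoNZ L)ˣ) :
    ((u : Rring 2 twoNZ L) : ℂ) ^ 2 ∈ K ∧
    ((u : Rring 2 twoNZ L) : ℂ) ^ 2 ∈ Rring 2 twoNZ K ∧
    ∃ v : (Rring 2 twoNZ K)ˣ, ((v : Rring 2 twoNZ K) : ℂ) = ((u : Rring 2 twoNZ L) : ℂ) ^ 2 := by
  obtain ⟨a, ha, hua⟩ := Rring.exists_eq_one_add_two_mul u
  have hK := h.sq_mem_of_mul_eq_one (u : Rring 2 twoNZ L).2.1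
    ((u⁻¹ : (Rring 2 twoNZ L)ˣ) : Rring 2 twoNZ L).2.1 (Rring.coe_mul_coe_inv u) ha hua
  obtain ⟨v, hv⟩ := Rring.exists_units_coe_eq_sq u hK
  exact ⟨hK, hv ▸ (v : Rring 2 twoNZ K).2, v, hv⟩

end
end

section
/- Let L be a totally imaginary quadratic extension of the totally real field K and let m ≥ 3 be an integer. Then every unit of the ring R_{m,L} lies in K; consequently R_{m,L}ˣ = R_{m,K}ˣ. -/
open Complex

noncomputable section

namespace UnitsAux

open Polynomial IntermediateField

set_option maxHeartbeats 1000000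
set_option synthInstance.maxHeartbeats 400000

lemma conj_integral {x : ℂ} (hx : IsIntegral ℤ x) : IsIntegral ℤ ((starRingEnd ℂ) x) :=
  hx.map (starRingEnd ℂ).toIntAlgHom

lemma im_eq_zero_of_mem {K : Subfield ℂ} (hK : IsTotallyRealSubfield K) {x : ℂ}
    (hx : x ∈ K) : x.im = 0 := hK K.subtype ⟨x, hx⟩

variable {K L : Subfield ℂ}

/-- Complex conjugation as a ring homomorphism `L →+* L`. -/
def conjL (h : IsTIQExt K L) : ↥L →+* ↥L where
  toFun x := ⟨(starRingEnd ℂ) ↑x, h.conj_closed _ x.2⟩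
  map_one' := by ext; simp
  map_mul' x y := by ext; simp
  map_zero' := by ext; simp
  map_add' x y := by ext; simp

@[simp] lemma conjL_coe (h : IsTIQExt K L) (x : ↥L) :
    ((conjL h x : ↥L) : ℂ) = (starRingEnd ℂ) ↑x := rfl

lemma ringHom_ext (h : IsTIQExt K L) {x : ↥L} (hx : (x : ℂ) ∉ K)
    (f g : ↥L →+* ℂ)
    (hK : ∀ k : ↥K, f (Subfield.inclusion h.le k) = g (Subfield.inclusion h.le k))
    (hfg : f x = g x) (y : ↥L) : f y = g y := by
  letI := (Subfield.inclusion h.le).toAlgebra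
  have hdeg : Module.finrank ↥K ↥L = 2 := h.deg
  have hsmul : ∀ (s : ↥K) (z : ↥L), ((s • z : ↥L) : ℂ) = (s : ℂ) * (z : ℂ) := by
    intro s z
    rw [Algebra.smul_def]
    rfl
  have hli : LinearIndependent ↥K ![(1 : ↥L), x] := by
    rw [LinearIndependent.pair_iff]
    intro s t hst
    have hst' : (s : ℂ) + (t : ℂ) * ((x : ℂ)) = 0 := by
      have h0 : ((s • (1:↥L) + t • x : ↥L) : ℂ) = ((0 : ↥L) : ℂ) :=
        congrArg (fun z : ↥L => (z : ℂ)) hst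
      rw [show ((s • (1:↥L) + t • x : ↥L) : ℂ)
          = ((s • (1:↥L) : ↥L) : ℂ) + ((t • x : ↥L) : ℂ) from rfl, hsmul, hsmul] at h0
      simpa using h0
    by_cases ht : t = 0
    · refine ⟨?_, ht⟩
      apply Subtype.ext
      apply Subtype.ext_iff.1 at ht
      have : ((t : ℂ)) = 0 := ht
      rw [this, zero_mul, add_zero] at hst'
      exact hst'
    · exfalso
      apply hx
      have htC : ((t : ℂ)) ≠ 0 := fun hc => ht (Subtype.ext hc)
      have hxval : (x : ℂ) = -((s : ℂ)) / ((t : ℂ)) := by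
        field_simp
        linear_combination hst'

      rw [hxval]
      exact K.div_mem (K.neg_mem s.2) t.2
  have hcard : Fintype.card (Fin 2) = Module.finrank ↥K ↥L := by
    rw [hdeg]; simp
  set B := basisOfLinearIndependentOfCardEqFinrank hli hcard with hBdef
  have hB : ⇑B = ![(1 : ↥L), x] := coe_basisOfLinearIndependentOfCardEqFinrank hli hcard
  have hB0 : B 0 = 1 := by rw [hB]; rfl
  have hB1 : B 1 = x := by rw [hB]; rfl
  set c := B.repr y 0 with hc
  set d := B.repr y 1 with hd
  have hy : c • (1 : ↥L) + d • x = y := by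
    have := B.sum_repr y
    rw [Fin.sum_univ_two, hB0, hB1] at this
    exact this
  have hy' : y = Subfield.inclusion h.le c + Subfield.inclusion h.le d * x := by
    rw [← hy, Algebra.smul_def, Algebra.smul_def, mul_one]
    rfl
  rw [hy', map_add, map_add, map_mul, map_mul, hK c, hK d, hfg]

lemma mem_K_of_conj_eq (h : IsTIQExt K L) {x : ℂ} (hxL : x ∈ L)
    (hc : (starRingEnd ℂ) x = x) : x ∈ K := by
  by_contra hx
  obtain ⟨y, hy⟩ := h.tot_imaginary L.subtype
  have key : ∀ z : ↥L, (L.subtype.comp (conjL h)) z = L.subtype z := by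
    intro z
    refine ringHom_ext h (x := (⟨x, hxL⟩ : ↥L)) hx _ _ ?_ ?_ z
    · intro k
      show (starRingEnd ℂ) ((k : ℂ)) = (k : ℂ)
      rw [Complex.conj_eq_iff_im]
      exact im_eq_zero_of_mem h.tot_real k.2
    · exact hc
  have := key y
  simp only [RingHom.comp_apply] at this
  apply hy
  rw [← Complex.conj_eq_iff_im]
  exact this

lemma conj_comm (h : IsTIQExt K L) (σ : ↥L →+* ℂ) (y : ↥L) :
    σ (conjL h y) = (starRingEnd ℂ) (σ y) := by
  obtain ⟨x0, hx0⟩ := h.tot_imaginary L.subtype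
  have hx0' : ((x0 : ℂ)).im ≠ 0 := hx0
  set αL : ↥L := x0 - conjL h x0 with hαL
  have hαc : (αL : ℂ) = (x0 : ℂ) - (starRingEnd ℂ) ((x0 : ℂ)) := by
    rw [hαL]; push_cast [conjL_coe]; ring
  have hαre : ((αL : ℂ)).re = 0 := by
    rw [hαc, Complex.sub_re, Complex.conj_re]; ring
  have hαim : ((αL : ℂ)).im ≠ 0 := by
    rw [hαc, Complex.sub_im, Complex.conj_im]
    intro hh; apply hx0'; linarith
  have hαK : ((αL : ℂ)) ∉ K := fun hmem => hαim (im_eq_zero_of_mem h.tot_real hmem)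
  -- conj of α is -α
  have hconjα : conjL h αL = -αL := by
    apply Subtype.ext
    show (starRingEnd ℂ) ((αL : ℂ)) = -(αL : ℂ)
    apply Complex.ext <;> simp [hαre]
  -- α² lies in K
  have hα2K : (((αL * αL : ↥L) : ℂ)) ∈ K := by
    apply mem_K_of_conj_eq h (αL * αL).2
    push_cast
    rw [map_mul]
    have : (starRingEnd ℂ) ((αL : ℂ)) = -(αL : ℂ) := congrArg Subtype.val hconjα
    rw [this]; ring
  -- σ α is purely imaginary
  have hσα2 : (σ (αL * αL)).im = 0 := by
    have : σ (αL * αL) = (σ.comp (Subfield.inclusion h.le)) ⟨_, hα2K⟩ := by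
      simp only [RingHom.comp_apply]
      congr 1
    rw [this]
    exact h.tot_real (σ.comp (Subfield.inclusion h.le)) _
  have hσαim : (σ αL).im ≠ 0 := by
    intro him
    obtain ⟨w, hw⟩ := h.tot_imaginary σ
    apply hw
    have key : ∀ z : ↥L, σ z = ((starRingEnd ℂ).comp σ) z := by
      intro z
      refine ringHom_ext h (x := αL) hαK σ ((starRingEnd ℂ).comp σ) ?_ ?_ z
      · intro k
        simp only [RingHom.comp_apply]
        exact ((Complex.conj_eq_iff_im).2
          (h.tot_real (σ.comp (Subfield.inclusion h.le)) k)).symm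
      · simp only [RingHom.comp_apply]
        exact ((Complex.conj_eq_iff_im).2 him).symm

    have := key w
    simp only [RingHom.comp_apply] at this
    rw [← Complex.conj_eq_iff_im]
    exact this.symm
  have hσαre : (σ αL).re = 0 := by
    have : (σ αL * σ αL).im = 0 := by rw [← map_mul]; exact hσα2
    rw [Complex.mul_im] at this
    have := this
    rcases mul_eq_zero.1 (by linarith : (σ αL).re * (σ αL).im = 0) with h' | h'
    · exact h'
    · exact absurd h' hσαim
  -- the two ring homs agree on K and on α
  refine ringHom_ext h (x := αL) hαK (σ.comp (conjL h)) ((starRingEnd ℂ).comp σ) ?_ ?_ y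
  · intro k
    simp only [RingHom.comp_apply]
    have h1 : conjL h (Subfield.inclusion h.le k) = Subfield.inclusion h.le k := by
      apply Subtype.ext
      show (starRingEnd ℂ) ((k : ℂ)) = (k : ℂ)
      rw [Complex.conj_eq_iff_im]
      exact im_eq_zero_of_mem h.tot_real k.2
    rw [h1]
    exact ((Complex.conj_eq_iff_im).2
      (h.tot_real (σ.comp (Subfield.inclusion h.le)) k)).symm
  · simp only [RingHom.comp_apply]
    rw [hconjα, map_neg]
    apply Complex.ext <;> simp [hσαre]

lemma multiset_prod_le_one (s : Multiset ℝ) (hs : ∀ x ∈ s, 0 ≤ x ∧ x ≤ 1) : s.prod ≤ 1 := by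
  induction s using Multiset.induction_on with
  | empty => simp
  | cons a t ih =>
    rw [Multiset.prod_cons]
    have ha := hs a (Multiset.mem_cons_self a t)
    have ht : ∀ x ∈ t, 0 ≤ x ∧ x ≤ 1 := fun x hx => hs x (Multiset.mem_cons_of_mem hx)
    have h1 := ih ht
    have h2 : 0 ≤ t.prod := Multiset.prod_nonneg (fun x hx => (ht x hx).1)
    nlinarith [ha.1, ha.2]

lemma multiset_prod_lt_one (s : Multiset ℝ) (h0 : s ≠ 0)
    (hs : ∀ x ∈ s, 0 ≤ x ∧ x < 1) : s.prod < 1 := by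
  obtain ⟨a, ha⟩ := Multiset.exists_mem_of_ne_zero h0
  obtain ⟨t, rfl⟩ := Multiset.exists_cons_of_mem ha
  rw [Multiset.prod_cons]
  have ha' := hs a (Multiset.mem_cons_self a t)
  have ht : ∀ x ∈ t, 0 ≤ x ∧ x ≤ 1 :=
    fun x hx => ⟨(hs x (Multiset.mem_cons_of_mem hx)).1,
      le_of_lt (hs x (Multiset.mem_cons_of_mem hx)).2⟩
  have h1 := multiset_prod_le_one t ht
  have h2 : 0 ≤ t.prod := Multiset.prod_nonneg (fun x hx => (ht x hx).1)
  nlinarith [ha'.1, ha'.2]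

lemma exists_embedding {ℓ : Type} [Field ℓ] [CharZero ℓ] [Algebra.IsAlgebraic ℚ ℓ]
    (γ : ℓ) (hQL : IsIntegral ℚ γ) (z : ℂ)
    (hz0 : (aeval z) (minpoly ℚ γ) = 0) : ∃ σ : ℓ →+* ℂ, σ γ = z := by
  have hz' : (aeval z) (minpoly ℚ (IntermediateField.AdjoinSimple.gen ℚ γ)) = 0 := by
    exact (congrArg (aeval z) (IntermediateField.minpoly_gen ℚ γ)).trans hz0
  set pb := IntermediateField.adjoin.powerBasis hQL with hpb
  have hgen : pb.gen = IntermediateField.AdjoinSimple.gen ℚ γ :=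
    IntermediateField.adjoin.powerBasis_gen hQL
  have hz'' : (aeval z) (minpoly ℚ pb.gen) = 0 := by rw [hgen]; exact hz'
  set φ₀ := pb.lift z hz'' with hφ₀
  letI : Algebra ↥(ℚ⟮γ⟯) ℂ := φ₀.toAlgebra
  haveI : NoZeroSMulDivisors ↥(ℚ⟮γ⟯) ℓ :=
    inferInstance
  haveI : NoZeroSMulDivisors ↥(ℚ⟮γ⟯) ℂ :=
    inferInstance
  haveI : Algebra.IsAlgebraic ↥(ℚ⟮γ⟯) ℓ := Algebra.IsAlgebraic.tower_top (K := ℚ) _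
  set ψ : ℓ →ₐ[↥(ℚ⟮γ⟯)] ℂ := IsAlgClosed.lift with hψ
  refine ⟨ψ.toRingHom, ?_⟩
  show ψ (algebraMap ↥(ℚ⟮γ⟯) ℓ (IntermediateField.AdjoinSimple.gen ℚ γ)) = z
  rw [ψ.commutes]
  show φ₀ (IntermediateField.AdjoinSimple.gen ℚ γ) = z
  rw [← hgen, hφ₀]
  exact pb.lift_gen z hz''

/-- An algebraic integer all of whose conjugates have absolute value `< 1` is zero. -/
lemma eq_zero_of_abs_lt_one {ℓ : Type} [Field ℓ] [CharZero ℓ] (ι : ℓ →+* ℂ)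
    (halg : ∀ x : ℓ, IsAlgebraic ℚ (ι x)) (γ : ℓ)
    (hint : IsIntegral ℤ (ι γ))
    (hb : ∀ σ : ℓ →+* ℂ, ‖σ γ‖ < 1) : γ = 0 := by
  letI : Algebra ℓ ℂ := ι.toAlgebra
  haveI : IsScalarTower ℚ ℓ ℂ := IsScalarTower.of_algebraMap_eq' (Subsingleton.elim _ _)
  haveI : IsScalarTower ℤ ℓ ℂ := IsScalarTower.of_algebraMap_eq' (Subsingleton.elim _ _)
  have hinj : Function.Injective (algebraMap ℓ ℂ) := ι.injective
  haveI : Algebra.IsAlgebraic ℚ ℓ :=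
    ⟨fun x => (isAlgebraic_algebraMap_iff hinj).1 (halg x)⟩
  have hQ : IsIntegral ℚ (ι γ) := hint.tower_top
  have hintL : IsIntegral ℤ γ := (isIntegral_algebraMap_iff hinj).1 hint
  have hQL : IsIntegral ℚ γ := (isIntegral_algebraMap_iff hinj).1 hQ
  set q : ℚ[X] := minpoly ℚ (ι γ) with hq
  have hqL : minpoly ℚ γ = q := by
    rw [hq, show ι γ = algebraMap ℓ ℂ γ from rfl, minpoly.algebraMap_eq hinj]
  have hqmonic : q.Monic := minpoly.monic hQ
  set qc : ℂ[X] := q.map (algebraMap ℚ ℂ) with hqc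
  have hqcmonic : qc.Monic := hqmonic.map _
  have hsplits : Splits qc :=
    IsAlgClosed.splits qc
  -- every root of qc is σ γ for some σ : ℓ →+* ℂ
  have hroot : ∀ z ∈ qc.roots, ∃ σ : ℓ →+* ℂ, σ γ = z := by
    intro z hz
    have hz0 : (aeval z) q = 0 := by
      have h1 := (Polynomial.mem_roots (hqcmonic.ne_zero)).1 hz
      rwa [Polynomial.IsRoot.def, hqc, Polynomial.eval_map, ← Polynomial.aeval_def] at h1
    exact exists_embedding γ hQL z (by rw [hqL]; exact hz0)
  -- the constant coefficient is small
  have hdeg : 0 < q.natDegree := minpoly.natDegree_pos hQ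
  have hcard : qc.roots.card = q.natDegree := by
    rw [Polynomial.splits_iff_card_roots.1 hsplits]
    exact hqmonic.natDegree_map _
  have hprod : qc.coeff 0 = (-1) ^ qc.natDegree * qc.roots.prod :=
    hsplits.coeff_zero_eq_prod_roots_of_monic hqcmonic
  have habs : ‖qc.coeff 0‖ < 1 := by
    rw [hprod]
    rw [norm_mul, norm_pow, norm_neg, norm_one, one_pow, one_mul]
    rw [show ‖qc.roots.prod‖ = (qc.roots.map (‖·‖)).prod from
      map_multiset_prod (normHom : ℂ →*₀ ℝ) _]
    apply multiset_prod_lt_one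
    · intro hzero
      rw [Multiset.map_eq_zero] at hzero
      rw [hzero] at hcard
      simp at hcard
      omega
    · intro x hx
      rw [Multiset.mem_map] at hx
      obtain ⟨z, hz, rfl⟩ := hx
      obtain ⟨σ, rfl⟩ := hroot z hz
      exact ⟨norm_nonneg _, hb σ⟩
  -- hence it is zero
  have hcoeff : q.coeff 0 = 0 := by
    have h0 : qc.coeff 0 = algebraMap ℚ ℂ (q.coeff 0) := by
      rw [hqc, Polynomial.coeff_map]
    rw [h0] at habs
    have h2 : |(q.coeff 0 : ℚ)| < 1 := by
      rw [show (algebraMap ℚ ℂ) (q.coeff 0) = (((q.coeff 0 : ℚ) : ℝ) : ℂ) by norm_cast,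
        Complex.norm_real, Real.norm_eq_abs] at habs
      exact_mod_cast habs
    have hq' : q = (minpoly ℤ (ι γ)).map (algebraMap ℤ ℚ) := by
      rw [hq, ← minpoly.isIntegrallyClosed_eq_field_fractions ℚ ℂ hint]
      rfl
    rw [hq', Polynomial.coeff_map] at h2 ⊢
    rw [show ((algebraMap ℤ ℚ) ((minpoly ℤ (ι γ)).coeff 0))
        = (((minpoly ℤ (ι γ)).coeff 0 : ℤ) : ℚ) from rfl] at h2 ⊢
    have h3 : |((minpoly ℤ (ι γ)).coeff 0 : ℤ)| < 1 := by exact_mod_cast h2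
    have h4 : (minpoly ℤ (ι γ)).coeff 0 = 0 := by
      rcases abs_cases ((minpoly ℤ (ι γ)).coeff 0) with ⟨h5, h6⟩ | ⟨h5, h6⟩ <;> omega
    rw [h4]; simp
  -- so X divides q, and q being irreducible monic, q = X
  have hX : X ∣ q := Polynomial.X_dvd_iff.2 hcoeff
  obtain ⟨c, hc⟩ := hX
  rcases (minpoly.irreducible hQL).isUnit_or_isUnit (hqL ▸ hc) with hu | hu
  · exact absurd hu Polynomial.not_isUnit_X
  · obtain ⟨r, _, hr⟩ := Polynomial.isUnit_iff.1 hu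
    have hr1 : r = 1 := by
      have h5 := hqmonic
      rw [Polynomial.Monic, hc, ← hr, Polynomial.leadingCoeff_mul,
        Polynomial.leadingCoeff_X, Polynomial.leadingCoeff_C, one_mul] at h5
      exact h5
    have hqX : q = X := by rw [hc, ← hr, hr1]; simp
    have h6 := minpoly.aeval ℚ γ
    rw [hqL, hqX] at h6
    simpa using h6

lemma unit_coe_mul_inv {R : Subring ℂ} (u : Rˣ) :
    ((u : R) : ℂ) * (((u⁻¹ : Rˣ) : R) : ℂ) = 1 := by
  rw [← MulMemClass.coe_mul, u.mul_inv, OneMemClass.coe_one]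

lemma Rset_mono {m : ℕ} (hKL : K ≤ L) : Rset m K ⊆ Rset m L := by
  rintro x ⟨⟨hx1, hx2⟩, a, ⟨ha1, ha2⟩, j, hj1, hj2, hja⟩
  exact ⟨⟨hKL hx1, hx2⟩, a, ⟨hKL ha1, ha2⟩, j, hj1, hj2, hja⟩

end UnitsAux

open UnitsAux in
/-- Let `L` be a totally imaginary quadratic extension of the totally real field `K` and let
`m ≥ 3`. Then every unit of `R_{m,L}` lies in `K`; consequently `R_{m,L}ˣ = R_{m,K}ˣ`. -/
theorem units_Rring_eq (K L : Subfield ℂ) (h : IsTIQExt K L) (m : ℕ) (hm : 3 ≤ m) :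
    (∀ u : (Rring m (by omega) L)ˣ, ((u : Rring m (by omega : m ≠ 0) L) : ℂ) ∈ K) ∧
    {x : ℂ | ∃ u : (Rring m (by omega : m ≠ 0) L)ˣ, ((u : Rring m (by omega : m ≠ 0) L) : ℂ) = x}
      = {x : ℂ | ∃ u : (Rring m (by omega : m ≠ 0) K)ˣ,
          ((u : Rring m (by omega : m ≠ 0) K) : ℂ) = x} := by
  have hm0 : m ≠ 0 := by omega
  have hmC : ((m : ℂ)) ≠ 0 := by exact_mod_cast hm0
  -- Part 1
  have part1 : ∀ u : (Rring m hm0 L)ˣ, ((u : Rring m hm0 L) : ℂ) ∈ K := by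
    intro u
    set x : ℂ := ((u : Rring m hm0 L) : ℂ) with hxdef
    set y : ℂ := (((u⁻¹ : (Rring m hm0 L)ˣ) : Rring m hm0 L) : ℂ) with hydef
    have hxy : x * y = 1 := unit_coe_mul_inv u
    have hxmem : x ∈ Rset m L := (u : Rring m hm0 L).2
    have hymem : y ∈ Rset m L := ((u⁻¹ : (Rring m hm0 L)ˣ) : Rring m hm0 L).2
    obtain ⟨hxO, a, haO, j, _, _, hxa⟩ := hxmem
    obtain ⟨hyO, b, hbO, k, _, _, hyb⟩ := hymem
    set xL : ↥L := ⟨x, hxO.1⟩ with hxL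
    set yL : ↥L := ⟨y, hyO.1⟩ with hyL
    set aL : ↥L := ⟨a, haO.1⟩ with haL
    set ζL : ↥L := xL * conjL h yL with hζL
    set βL : ↥L := (aL - conjL h aL) * conjL h yL with hβL
    have hxyL : xL * yL = 1 := Subtype.ext (by push_cast; exact hxy)
    -- the basic identity m·β = ζ − 1
    have hconjx : (starRingEnd ℂ) x = (j : ℂ) + (m : ℂ) * (starRingEnd ℂ) a := by
      rw [hxa]; simp
    have hconjxy : (starRingEnd ℂ) x * (starRingEnd ℂ) y = 1 := by
      rw [← map_mul, hxy, map_one]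
    have hβc : ((βL : ℂ)) = (a - (starRingEnd ℂ) a) * (starRingEnd ℂ) y := by
      rw [hβL]; push_cast [conjL_coe]; rfl
    have hζc : ((ζL : ℂ)) = x * (starRingEnd ℂ) y := by
      rw [hζL]; push_cast [conjL_coe]; rfl
    have hmβ : (m : ℂ) * ((βL : ℂ)) = ((ζL : ℂ)) - 1 := by
      rw [hβc, hζc]
      linear_combination -((starRingEnd ℂ) y) * hxa + ((starRingEnd ℂ) y) * hconjx - hconjxy
    have hβrel : ((m : ℕ) : ↥L) * βL = ζL - 1 := Subtype.ext (by push_cast; exact hmβ)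
    -- all conjugates of β are small
    have hsmall : ∀ σ : ↥L →+* ℂ, ‖σ βL‖ < 1 := by
      intro σ
      have habsζ : ‖σ ζL‖ = 1 := by
        have h1 : σ xL * σ yL = 1 := by rw [← map_mul, hxyL, map_one]
        have h2 : σ ζL = σ xL * (starRingEnd ℂ) (σ yL) := by
          rw [hζL, map_mul, conj_comm h σ yL]
        rw [h2, norm_mul, Complex.norm_conj]
        rw [← norm_mul, h1, norm_one]
      have h3 : (m : ℂ) * σ βL = σ ζL - 1 := by
        have := congrArg σ hβrel
        rw [map_mul, map_sub, map_one, map_natCast] at this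
        exact this
      have h4 : ‖(m : ℂ) * σ βL‖ ≤ 2 := by
        rw [h3]
        calc ‖σ ζL - 1‖ ≤ ‖σ ζL‖ + ‖(1 : ℂ)‖ :=
              norm_sub_le _ _
        _ = 2 := by rw [habsζ]; simp; norm_num
      rw [norm_mul, Complex.norm_natCast] at h4
      have hm3 : (3 : ℝ) ≤ (m : ℝ) := by exact_mod_cast hm
      nlinarith [norm_nonneg (σ βL)]
    -- β is an algebraic integer
    have hβint : IsIntegral ℤ ((βL : ℂ)) := by
      have hβc : ((βL : ℂ)) = (a - (starRingEnd ℂ) a) * (starRingEnd ℂ) y := by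
        rw [hβL]; push_cast; rfl
      rw [hβc]
      exact (haO.2.sub (conj_integral haO.2)).mul (conj_integral hyO.2)
    have hβL0 : βL = 0 := eq_zero_of_abs_lt_one L.subtype h.alg βL hβint hsmall
    have hβ0 : ((βL : ℂ)) = 0 := by rw [hβL0]; rfl
    -- hence ζ = 1, so conj x = x, so x ∈ K
    have hζ1 : x * (starRingEnd ℂ) y = 1 := by
      have h5 := hmβ
      rw [hβ0, mul_zero] at h5
      rw [← hζc]
      exact (eq_of_sub_eq_zero h5.symm)
    have hconjeq : (starRingEnd ℂ) x = x := by
      have hy0 : (starRingEnd ℂ) y ≠ 0 := by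
        intro h0
        rw [h0, mul_zero] at hζ1
        exact one_ne_zero hζ1.symm
      have hzz : ((starRingEnd ℂ) x - x) * (starRingEnd ℂ) y = 0 := by
        rw [sub_mul, hconjxy, hζ1]; ring
      rcases mul_eq_zero.1 hzz with h' | h'
      · exact sub_eq_zero.1 h'
      · exact absurd h' hy0
    exact mem_K_of_conj_eq h hxO.1 hconjeq
  refine ⟨part1, ?_⟩
  ext z
  simp only [Set.mem_setOf_eq]
  constructor
  · rintro ⟨u, rfl⟩
    set x : ℂ := ((u : Rring m hm0 L) : ℂ) with hxdef
    set y : ℂ := (((u⁻¹ : (Rring m hm0 L)ˣ) : Rring m hm0 L) : ℂ) with hydef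
    have hxy : x * y = 1 := unit_coe_mul_inv u
    have hxK : x ∈ K := part1 u
    have hyK : y ∈ K := part1 u⁻¹
    have hxmem : x ∈ Rset m L := (u : Rring m hm0 L).2
    have hymem : y ∈ Rset m L := ((u⁻¹ : (Rring m hm0 L)ˣ) : Rring m hm0 L).2
    obtain ⟨hxO, a, haO, j, _, _, hxa⟩ := hxmem
    obtain ⟨hyO, b, hbO, k, _, _, hyb⟩ := hymem
    have haval : a = (x - (j : ℂ)) / (m : ℂ) := by
      field_simp
      linear_combination -hxa
    have haK : a ∈ K := by
      rw [haval]
      exact K.div_mem (K.sub_mem hxK (intCast_mem K j)) (natCast_mem K m)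
    have hbval : b = (y - (k : ℂ)) / (m : ℂ) := by
      field_simp
      linear_combination -hyb
    have hbK : b ∈ K := by
      rw [hbval]
      exact K.div_mem (K.sub_mem hyK (intCast_mem K k)) (natCast_mem K m)
    have hxRK : x ∈ Rring m hm0 K :=
      Rset_norm hm0 (⟨hxK, hxO.2⟩ : x ∈ ringOfInt K) (⟨haK, haO.2⟩ : a ∈ ringOfInt K) hxa
    have hyRK : y ∈ Rring m hm0 K :=
      Rset_norm hm0 (⟨hyK, hyO.2⟩ : y ∈ ringOfInt K) (⟨hbK, hbO.2⟩ : b ∈ ringOfInt K) hyb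
    refine ⟨⟨⟨x, hxRK⟩, ⟨y, hyRK⟩, ?_, ?_⟩, rfl⟩
    · exact Subtype.ext (by push_cast; exact hxy)
    · exact Subtype.ext (by push_cast; rw [mul_comm]; exact hxy)
  · rintro ⟨v, rfl⟩
    set x : ℂ := ((v : Rring m hm0 K) : ℂ) with hxdef
    set y : ℂ := (((v⁻¹ : (Rring m hm0 K)ˣ) : Rring m hm0 K) : ℂ) with hydef
    have hxy : x * y = 1 := unit_coe_mul_inv v
    have hxmem : x ∈ Rset m L := Rset_mono h.le ((v : Rring m hm0 K).2)
    have hymem : y ∈ Rset m L := Rset_mono h.le (((v⁻¹ : (Rring m hm0 K)ˣ) : Rring m hm0 K).2)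
    refine ⟨⟨⟨x, hxmem⟩, ⟨y, hymem⟩, ?_, ?_⟩, rfl⟩
    · exact Subtype.ext (by push_cast; exact hxy)
    · exact Subtype.ext (by push_cast; rw [mul_comm]; exact hxy)

end
end

section
/- Let K₀ ⊆ K₁ be totally real subfields of ℂ, let d ∈ O_{K₀}, and suppose there exists s ∈ K₁ with s² = d² + d. Set a = 2(2d + 1). Then there exists a unit u of the ring R_{2,K₁} such that a = u + u⁻¹; in particular, a² = u² + u⁻² + 2. -/
open Complex

noncomputable section

/-- Let `K₀ ⊆ K₁` be totally real subfields of `ℂ`, `d ∈ O_{K₀}` with `√(d²+d) ∈ K₁`, and set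
`a = 2(2d+1)`. Then there is a unit `u ∈ R_{2,K₁}ˣ` with `a = u + u⁻¹`; in particular
`a² = u² + u⁻² + 2`. -/
theorem sum_unit_inv (K₀ K₁ : Subfield ℂ) (h01 : K₀ ≤ K₁)
    (halg : ∀ x : K₁, IsAlgebraic ℚ (x : ℂ))
    (h0 : IsTotallyRealSubfield K₀) (h1 : IsTotallyRealSubfield K₁)
    (d : ℂ) (hd : d ∈ ringOfInt K₀) (hs : ∃ s ∈ K₁, s ^ 2 = d ^ 2 + d) :
    ∃ u : (Rring 2 twoNZ K₁)ˣ,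
      2 * (2 * d + 1) =
        ((u : Rring 2 twoNZ K₁) : ℂ) + (((u⁻¹ : (Rring 2 twoNZ K₁)ˣ) : Rring 2 twoNZ K₁) : ℂ) ∧
      (2 * (2 * d + 1)) ^ 2 =
        ((u : Rring 2 twoNZ K₁) : ℂ) ^ 2
          + (((u⁻¹ : (Rring 2 twoNZ K₁)ˣ) : Rring 2 twoNZ K₁) : ℂ) ^ 2 + 2 := by
  obtain ⟨s, hsK, hs2⟩ := hs
  have hd1 : d ∈ ringOfInt K₁ := ⟨h01 hd.1, hd.2⟩
  have hsint : IsIntegral ℤ s := by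
    have h2 : IsIntegral ℤ (s ^ 2) := by
      rw [hs2]; exact (hd.2.pow 2).add hd.2
    exact h2.of_pow two_pos
  have hsO : s ∈ ringOfInt K₁ := ⟨hsK, hsint⟩
  have hds : d + s ∈ ringOfInt K₁ := (ringOfInt K₁).add_mem hd1 hsO
  have hdms : d - s ∈ ringOfInt K₁ := (ringOfInt K₁).sub_mem hd1 hsO
  have huR : (2 * d + 1 + 2 * s) ∈ Rring 2 twoNZ K₁ :=
    Rset_norm twoNZ ((ringOfInt K₁).add_mem
      ((ringOfInt K₁).add_mem ((ringOfInt K₁).mul_mem (natCast_mem (ringOfInt K₁) 2) hd1)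
        (ringOfInt K₁).one_mem)
      ((ringOfInt K₁).mul_mem (natCast_mem (ringOfInt K₁) 2) hsO))
      hds (j := 1) (by push_cast; ring)
  have hvR : (2 * d + 1 - 2 * s) ∈ Rring 2 twoNZ K₁ :=
    Rset_norm twoNZ ((ringOfInt K₁).sub_mem
      ((ringOfInt K₁).add_mem ((ringOfInt K₁).mul_mem (natCast_mem (ringOfInt K₁) 2) hd1)
        (ringOfInt K₁).one_mem)
      ((ringOfInt K₁).mul_mem (natCast_mem (ringOfInt K₁) 2) hsO))
      hdms (j := 1) (by push_cast; ring)
  have hmul : ((⟨_, huR⟩ : Rring 2 twoNZ K₁) * ⟨_, hvR⟩ : Rring 2 twoNZ K₁) = 1 := by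
    ext
    show (2 * d + 1 + 2 * s) * (2 * d + 1 - 2 * s) = 1
    linear_combination -4 * hs2
  have hmul' : ((⟨_, hvR⟩ : Rring 2 twoNZ K₁) * ⟨_, huR⟩ : Rring 2 twoNZ K₁) = 1 := by
    rw [mul_comm]; exact hmul
  refine ⟨⟨⟨_, huR⟩, ⟨_, hvR⟩, hmul, hmul'⟩, ?_, ?_⟩
  · show 2 * (2 * d + 1) = (2 * d + 1 + 2 * s) + (2 * d + 1 - 2 * s)
    ring
  · show (2 * (2 * d + 1)) ^ 2 = (2 * d + 1 + 2 * s) ^ 2 + (2 * d + 1 - 2 * s) ^ 2 + 2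
    linear_combination -8 * hs2

end
end

section
/- Let K be a totally real field that is closed under square roots, i.e., α ∈ K whenever α ∈ ℂ is a totally real algebraic number with α² ∈ K, and let L be a totally imaginary quadratic extension of K. Then, with X₀ = {u₁² + u₂² − u₃² − u₄² : u₁, u₂, u₃, u₄ units of R_{2,L}}, X₁ = {d ∈ O_L : 32·d ∈ X₀}, and X = {α ∈ O_L : there exist x₁, x₂ ∈ X₁ with 4·α = x₁ − x₂}, one has X = O_K as subsets of O_L. -/
/-!
Squares of units of `R_{2,L}` are real. A unit is `u = 1 + 2a` with inverse `v = 1 + 2b`, and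
`η = u v̄ ∈ L` satisfies `η ≡ 1 mod 2` and has all its conjugates on the unit circle, because
every embedding of the CM field `L` commutes with complex conjugation. So `δ = (η - 1)/2` is an
algebraic integer whose conjugates have absolute value `≤ 1`; if `δ ≠ 0` its norm is a nonzero
integer, which forces `|δ| = 1`. Hence `η = ±1`, `ū = ±u` and `u²` is real. Therefore `X` consists
of real elements of `L`, which lie in `K`.

Conversely, if `c ∈ O_K` and `c(c+1)` is totally nonnegative, closure of `K` under square roots
gives `e ∈ O_K` with `e² = c(c+1)`; then `U = 1 + 2(c + e)` is a unit of `R_{2,L}` with inverse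
`1 + 2(c - e)`, and `U² + U⁻² = 2 + 16c(c+1)`. When `n` bounds all conjugates of `β ∈ O_K`, both
`c = β + n` and `c = β - n - 1` qualify, and the two values of `16c(c+1)` differ by `32(2n+1)β`.
Thus `(2n+1)β ∈ X₁`, and `4β = (2n+5)β - (2n+1)β`.
-/

open Complex

noncomputable section

open ComplexConjugate Polynomial
open scoped ComplexOrder

lemma Complex.conj_eq_neg_of_re_eq_zero {z : ℂ} (hz : z.re = 0) : conj z = -z :=
  Complex.ext (by simp [hz]) (by simp)

lemma Complex.eq_neg_one_of_norm_eq_one_of_norm_sub_one_eq_two {z : ℂ} (h1 : ‖z‖ = 1)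
    (h2 : ‖z - 1‖ = 2) : z = -1 := by
  have h1' := congrArg (· ^ 2) h1
  have h2' := congrArg (· ^ 2) h2
  simp only [← Complex.normSq_eq_norm_sq, Complex.normSq_apply, Complex.sub_re,
    Complex.sub_im, Complex.one_re, Complex.one_im] at h1' h2'
  have hre : z.re = -1 := by nlinarith
  have him : z.im = 0 := by nlinarith
  exact Complex.ext (by simp [hre]) (by simp [him])

lemma not_isIntegral_two_inv : ¬ IsIntegral ℤ ((2 : ℂ)⁻¹) := by
  rw [show (2 : ℂ)⁻¹ = algebraMap ℚ ℂ 2⁻¹ by simp,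
    isIntegral_algebraMap_iff (algebraMap ℚ ℂ).injective, IsIntegrallyClosed.isIntegral_iff]
  rintro ⟨n, hn⟩
  have hn : (n : ℚ) = 2⁻¹ := hn
  have : 2 * n = 1 := by exact_mod_cast (by rw [hn]; norm_num : (2 * n : ℚ) = 1)
  omega

lemma aeval_ringHom_apply_minpoly {M : Subfield ℂ} (σ : M →+* ℂ) (x : M) :
    aeval (σ x) (minpoly ℚ (x : ℂ)) = 0 := by
  rw [show (x : ℂ) = algebraMap M ℂ x from rfl, minpoly.algebraMap_eq (algebraMap M ℂ).injective]
  exact minpoly.aeval_algHom ℚ σ.toRatAlgHom x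

lemma exists_ringHom_apply_eq {M : Subfield ℂ} (halg : ∀ x : M, IsAlgebraic ℚ (x : ℂ))
    (x : M) {z : ℂ} (hz : aeval z (minpoly ℚ (x : ℂ)) = 0) : ∃ σ : M →+* ℂ, σ x = z := by
  have hint : ∀ y : M, IsIntegral ℚ y := fun y =>
    (isIntegral_algebraMap_iff (algebraMap M ℂ).injective).mp (halg y).isIntegral
  rw [show (x : ℂ) = algebraMap M ℂ x from rfl,
    minpoly.algebraMap_eq (algebraMap M ℂ).injective] at hz
  obtain ⟨φ, hφ⟩ := IntermediateField.exists_algHom_of_splits_of_aeval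
    (fun y => ⟨hint y, IsAlgClosed.splits _⟩) hz
  exact ⟨φ.toRingHom, hφ⟩

lemma exists_nat_forall_norm_ringHom_le {M : Subfield ℂ} (x : M) (hx : IsAlgebraic ℚ (x : ℂ)) :
    ∃ a : ℕ, ∀ σ : M →+* ℂ, ‖σ x‖ ≤ a := by
  obtain ⟨a, ha⟩ := exists_nat_ge (∑ z ∈ ((minpoly ℚ (x : ℂ)).aroots ℂ).toFinset, ‖z‖)
  refine ⟨a, fun σ => le_trans ?_ ha⟩
  refine Finset.single_le_sum (f := (‖·‖)) (fun _ _ => norm_nonneg _) ?_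
  simp [minpoly.ne_zero hx.isIntegral, aeval_ringHom_apply_minpoly]

open IntermediateField in
lemma norm_eq_one_of_forall_minpoly_root_norm_le_one {x : ℂ} (hx : IsIntegral ℤ x)
    (hx0 : x ≠ 0) (hroots : ∀ z : ℂ, aeval z (minpoly ℚ x) = 0 → ‖z‖ ≤ 1) : ‖x‖ = 1 := by
  refine le_antisymm (hroots x (minpoly.aeval ℚ x)) ?_
  have hxℚ : IsIntegral ℚ x := hx.tower_top
  have : FiniteDimensional ℚ ℚ⟮x⟯ := adjoin.finiteDimensional hxℚ
  set g := AdjoinSimple.gen ℚ x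
  have hg : IsIntegral ℤ g := by
    rwa [← isIntegral_algebraMap_iff (algebraMap ℚ⟮x⟯ ℂ).injective]
  obtain ⟨n, hn⟩ := IsIntegrallyClosed.isIntegral_iff.mp (Algebra.isIntegral_norm ℚ hg)
  have hn0 : n ≠ 0 := by
    rintro rfl
    exact hx0 (congrArg Subtype.val (Algebra.norm_eq_zero_iff.mp (by rw [← hn, map_zero])))
  have hconj : ∀ τ : ℚ⟮x⟯ →ₐ[ℚ] ℂ, ‖τ g‖ ≤ 1 := fun τ =>
    hroots _ (by rw [← minpoly_gen ℚ x]; exact minpoly.aeval_algHom ℚ τ g)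
  have hprod : (n : ℂ) = ∏ τ : ℚ⟮x⟯ →ₐ[ℚ] ℂ, τ g := by
    rw [← Algebra.norm_eq_prod_embeddings, ← hn]; simp
  classical
  calc (1 : ℝ) ≤ ‖(n : ℂ)‖ := by
        rw [Complex.norm_intCast]; exact_mod_cast Int.one_le_abs hn0
    _ = ‖(val ℚ⟮x⟯) g‖ * ∏ τ ∈ Finset.univ.erase (val ℚ⟮x⟯), ‖τ g‖ := by
      rw [hprod, norm_prod]
      exact (Finset.mul_prod_erase _ (fun τ : ℚ⟮x⟯ →ₐ[ℚ] ℂ => ‖τ g‖) (Finset.mem_univ _)).symm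
    _ ≤ ‖x‖ * 1 := by
      gcongr
      · rfl
      · exact Finset.prod_le_one (fun _ _ => norm_nonneg _) fun τ _ => hconj τ
    _ = ‖x‖ := mul_one _

lemma totallyRealNum_of_forall_minpoly_sq_root_nonneg {e : ℂ} (he : IsAlgebraic ℚ e)
    (hroots : ∀ z : ℂ, aeval z (minpoly ℚ (e ^ 2)) = 0 → 0 ≤ z) : TotallyRealNum e := by
  refine ⟨he, fun z hz => Complex.sq_nonneg_iff.mp (hroots _ ?_)⟩
  obtain ⟨q, hq⟩ : minpoly ℚ e ∣ (minpoly ℚ (e ^ 2)).comp (X ^ 2) :=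
    minpoly.dvd ℚ e (by simp [aeval_comp])
  simpa [aeval_comp, hz] using congrArg (aeval z) hq

lemma exists_mem_sq_eq_of_forall_map_nonneg {K : Subfield ℂ}
    (hsqrt : ∀ α : ℂ, TotallyRealNum α → α ^ 2 ∈ K → α ∈ K)
    (halg : ∀ x : K, IsAlgebraic ℚ (x : ℂ)) (w : K) (hw : ∀ σ : K →+* ℂ, 0 ≤ σ w) :
    ∃ e ∈ K, e ^ 2 = (w : ℂ) := by
  obtain ⟨r, hr, hrw⟩ := RCLike.nonneg_iff_exists_ofReal.mp (hw K.subtype)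
  have he : ((√r : ℝ) : ℂ) ^ 2 = w := by rw [← Complex.ofReal_pow, Real.sq_sqrt hr]; exact hrw
  refine ⟨_, hsqrt _ ?_ (he ▸ w.2), he⟩
  refine totallyRealNum_of_forall_minpoly_sq_root_nonneg
    (IsAlgebraic.of_pow two_pos (he ▸ halg w)) fun z hz => ?_
  obtain ⟨σ, rfl⟩ := exists_ringHom_apply_eq halg w (he ▸ hz)
  exact hw σ

lemma Rring.coe_mul_coe_inv_s14 {L : Subfield ℂ} (u : (Rring 2 twoNZ L)ˣ) :
    ((u : Rring 2 twoNZ L) : ℂ) * ((u⁻¹ : (Rring 2 twoNZ L)ˣ) : Rring 2 twoNZ L) = 1 :=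
  congrArg Subtype.val u.mul_inv

lemma Rring.exists_coe_unit_eq_one_add_two_mul {L : Subfield ℂ} (u : (Rring 2 twoNZ L)ˣ) :
    ∃ a ∈ ringOfInt L, ((u : Rring 2 twoNZ L) : ℂ) = 1 + 2 * a := by
  obtain ⟨-, a, ha, j, hj0, hj2, hu⟩ := (u : Rring 2 twoNZ L).2
  interval_cases j
  · refine absurd ?_ not_isIntegral_two_inv
    have h2 : 2 * (a * ((u⁻¹ : (Rring 2 twoNZ L)ˣ) : Rring 2 twoNZ L)) = (1 : ℂ) := by
      rw [← Rring.coe_mul_coe_inv_s14 u, hu]; push_cast; ring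
    rw [← eq_inv_of_mul_eq_one_right h2]
    exact ha.2.mul ((u⁻¹ : (Rring 2 twoNZ L)ˣ) : Rring 2 twoNZ L).2.1.2
  · exact ⟨a, ha, by rw [hu]; push_cast; ring⟩

lemma Rring.one_add_two_mul_mem {L : Subfield ℂ} {a : ℂ} (ha : a ∈ ringOfInt L) :
    1 + 2 * a ∈ Rring 2 twoNZ L :=
  Rset_norm twoNZ ((ringOfInt L).add_mem (ringOfInt L).one_mem
    ((ringOfInt L).mul_mem (ofNat_mem _ 2) ha)) ha (j := 1) (by push_cast; ring)

lemma Rring.exists_unit_sq_add_inv_sq {L : Subfield ℂ} {c e : ℂ} (hc : c ∈ ringOfInt L)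
    (he : e ∈ ringOfInt L) (hce : e ^ 2 = c * (c + 1)) :
    ∃ U : (Rring 2 twoNZ L)ˣ, ((U : Rring 2 twoNZ L) : ℂ) ^ 2 +
      ((U⁻¹ : (Rring 2 twoNZ L)ˣ) : Rring 2 twoNZ L) ^ 2 = 2 + 16 * (c * (c + 1)) := by
  have hmul : (1 + 2 * (c + e)) * (1 + 2 * (c - e)) = 1 := by linear_combination (-4) * hce
  refine ⟨⟨⟨_, one_add_two_mul_mem (add_mem hc he)⟩, ⟨_, one_add_two_mul_mem (sub_mem hc he)⟩,
    Subtype.ext hmul, Subtype.ext ((mul_comm _ _).trans hmul)⟩, ?_⟩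
  change (1 + 2 * (c + e)) ^ 2 + (1 + 2 * (c - e)) ^ 2 = _
  linear_combination 8 * hce

namespace IsTIQExt

variable {K L : Subfield ℂ}

lemma im_eq_zero (h : IsTIQExt K L) {x : ℂ} (hx : x ∈ K) : x.im = 0 :=
  h.tot_real K.subtype ⟨x, hx⟩

lemma exists_imaginary_generator (h : IsTIQExt K L) :
    ∃ γ : L, (γ : ℂ).re = 0 ∧ (γ : ℂ).im ≠ 0 ∧
      ∀ x : L, ∃ a b : K, x = Subfield.inclusion h.le a + Subfield.inclusion h.le b * γ := by
  let := (Subfield.inclusion h.le).toAlgebra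
  obtain ⟨θ, hθ⟩ := h.tot_imaginary L.subtype
  let γ : L := θ - ⟨conj (θ : ℂ), h.conj_closed _ θ.2⟩
  have hγ : (γ : ℂ) = θ - conj (θ : ℂ) := rfl
  have hγim : (γ : ℂ).im ≠ 0 := by simpa [hγ, ← two_mul] using hθ
  have hind : LinearIndependent K ![1, γ] := by
    refine (LinearIndependent.pair_iff' one_ne_zero).mpr fun a ha => hγim ?_
    rw [← ha, Algebra.smul_def, mul_one]
    exact h.im_eq_zero a.2
  have hspan := hind.span_eq_top_of_card_eq_finrank (by simpa using h.deg.symm)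
  refine ⟨γ, by simp [hγ], hγim, fun x => ?_⟩
  have hx : x ∈ Submodule.span K {1, γ} := by
    rw [← Matrix.range_cons_cons_empty, hspan]; exact Submodule.mem_top
  obtain ⟨a, b, hab⟩ := Submodule.mem_span_pair.mp hx
  exact ⟨a, b, by rw [← hab, Algebra.smul_def, Algebra.smul_def, mul_one]; rfl⟩

lemma mem_of_im_eq_zero (h : IsTIQExt K L) {x : ℂ} (hx : x ∈ L) (him : x.im = 0) : x ∈ K := by
  obtain ⟨γ, -, hγim, hdec⟩ := h.exists_imaginary_generator
  obtain ⟨a, b, hab⟩ := hdec ⟨x, hx⟩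
  have hx : x = a + b * γ := congrArg Subtype.val hab
  have hb : (b : ℂ) = 0 := by
    refine Complex.ext ?_ (h.im_eq_zero b.2)
    simpa [hx, h.im_eq_zero a.2, h.im_eq_zero b.2, hγim] using him
  rw [hx, hb, zero_mul, add_zero]
  exact a.2

lemma map_conj (h : IsTIQExt K L) (σ : L →+* ℂ) (x : L) :
    σ ⟨conj (x : ℂ), h.conj_closed _ x.2⟩ = conj (σ x) := by
  obtain ⟨γ, hγre, hγim, hdec⟩ := h.exists_imaginary_generator
  set ι := Subfield.inclusion h.le
  have hι : ∀ a : K, ((ι a : L) : ℂ) = a := fun _ => rfl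
  have hσK : ∀ a : K, conj (σ (ι a)) = σ (ι a) := fun a =>
    Complex.conj_eq_iff_im.mpr (h.tot_real (σ.comp ι) a)
  have hσγ_im : (σ γ).im ≠ 0 := by
    intro h0
    obtain ⟨y, hy⟩ := h.tot_imaginary σ
    obtain ⟨a, b, rfl⟩ := hdec y
    simp [Complex.conj_eq_iff_im.mp (hσK a), Complex.conj_eq_iff_im.mp (hσK b), h0] at hy
  have hσγ_re : (σ γ).re = 0 := by
    have hγsq : ((γ * γ : L) : ℂ) ∈ K := h.mem_of_im_eq_zero (γ * γ).2 (by simp [hγre])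
    have := Complex.conj_eq_iff_im.mp (hσK ⟨_, hγsq⟩)
    rw [show ι ⟨_, hγsq⟩ = γ * γ from rfl, map_mul, Complex.mul_im, mul_comm (σ γ).im,
      ← two_mul] at this
    simpa [hσγ_im] using this
  obtain ⟨a, b, rfl⟩ := hdec x
  have hconj : (⟨conj ((ι a + ι b * γ : L) : ℂ), h.conj_closed _ (ι a + ι b * γ).2⟩ : L) =
      ι a - ι b * γ := by
    ext
    simp only [Subfield.coe_add, Subfield.coe_mul, Subfield.coe_sub, hι, map_add, map_mul,
      Complex.conj_eq_iff_im.mpr (h.im_eq_zero a.2), Complex.conj_eq_iff_im.mpr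
      (h.im_eq_zero b.2), Complex.conj_eq_neg_of_re_eq_zero hγre]
    ring
  rw [hconj]
  simp [hσK, Complex.conj_eq_neg_of_re_eq_zero hσγ_re]
  ring

lemma norm_map_eq_one (h : IsTIQExt K L) (σ : L →+* ℂ) {η : L}
    (hη : (η : ℂ) * conj (η : ℂ) = 1) : ‖σ η‖ = 1 := by
  have : σ η * conj (σ η) = 1 := by
    rw [← h.map_conj, ← map_mul, ← map_one σ]
    exact congrArg σ (Subtype.ext hη)
  rw [Complex.mul_conj, Complex.normSq_eq_norm_sq] at this
  exact (pow_eq_one_iff_of_nonneg (norm_nonneg _) two_ne_zero).mp (by exact_mod_cast this)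

lemma eq_one_or_eq_neg_one (h : IsTIQExt K L) {η : ℂ} (hηL : η ∈ L) (hη : η * conj η = 1)
    (hδ : IsIntegral ℤ ((η - 1) / 2)) : η = 1 ∨ η = -1 := by
  by_cases hδ0 : (η - 1) / 2 = 0
  · left; linear_combination 2 * hδ0
  right
  have hδL : (η - 1) / 2 ∈ L := L.div_mem (L.sub_mem hηL L.one_mem) (ofNat_mem L 2)
  have hδ1 := norm_eq_one_of_forall_minpoly_root_norm_le_one hδ hδ0 fun z hz => by
    obtain ⟨σ, rfl⟩ := exists_ringHom_apply_eq h.alg ⟨_, hδL⟩ hz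
    have hσ : σ ⟨_, hδL⟩ = (σ ⟨η, hηL⟩ - 1) / 2 := by
      rw [show (⟨_, hδL⟩ : L) = (⟨η, hηL⟩ - 1) / 2 from rfl, map_div₀, map_sub, map_one,
        map_ofNat]
    rw [hσ, norm_div, Complex.norm_ofNat, div_le_one two_pos]
    calc ‖σ ⟨η, hηL⟩ - 1‖ ≤ ‖σ ⟨η, hηL⟩‖ + ‖(1 : ℂ)‖ := norm_sub_le _ _
      _ = 2 := by rw [h.norm_map_eq_one σ hη, norm_one]; norm_num
  refine Complex.eq_neg_one_of_norm_eq_one_of_norm_sub_one_eq_two ?_ ?_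
  · simpa using h.norm_map_eq_one L.subtype (η := ⟨η, hηL⟩) hη
  · rw [norm_div, Complex.norm_ofNat] at hδ1; linarith

lemma sq_im_eq_zero_of_mul_eq_one (h : IsTIQExt K L) {a b : ℂ} (ha : a ∈ ringOfInt L)
    (hb : b ∈ ringOfInt L) (hab : (1 + 2 * a) * (1 + 2 * b) = 1) : ((1 + 2 * a) ^ 2).im = 0 := by
  have hab' : conj (1 + 2 * a) * conj (1 + 2 * b) = 1 := by rw [← map_mul, hab, map_one]
  set η := (1 + 2 * a) * conj (1 + 2 * b)
  have hηL : η ∈ L := L.mul_mem (L.add_mem L.one_mem (L.mul_mem (ofNat_mem L 2) ha.1))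
    (h.conj_closed _ (L.add_mem L.one_mem (L.mul_mem (ofNat_mem L 2) hb.1)))
  have hη : η * conj η = 1 := by
    simp only [η, map_mul, Complex.conj_conj]
    linear_combination conj (1 + 2 * a) * conj (1 + 2 * b) * hab + hab'
  have hδ : IsIntegral ℤ ((η - 1) / 2) := by
    have hbc : IsIntegral ℤ (conj b) := hb.2.map (starRingEnd ℂ).toIntAlgHom
    rw [show (η - 1) / 2 = a + conj b + 2 * (a * conj b) by
      simp only [η, map_add, map_mul, map_one, map_ofNat]; ring]
    exact (ha.2.add hbc).add ((isIntegral_algebraMap (x := (2 : ℤ))).mul (ha.2.mul hbc))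
  have hη2 : η ^ 2 = 1 := by
    rcases h.eq_one_or_eq_neg_one hηL hη hδ with h1 | h1 <;> rw [h1] <;> norm_num
  rw [← Complex.conj_eq_iff_im, map_pow]
  linear_combination (-(conj (1 + 2 * a)) ^ 2) * hη2 +
    (η * conj (1 + 2 * a) + (1 + 2 * a)) * (1 + 2 * a) * hab'

lemma sq_coe_unit_im_eq_zero (h : IsTIQExt K L) (u : (Rring 2 twoNZ L)ˣ) :
    (((u : Rring 2 twoNZ L) : ℂ) ^ 2).im = 0 := by
  obtain ⟨a, ha, hu⟩ := Rring.exists_coe_unit_eq_one_add_two_mul u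
  obtain ⟨b, hb, hv⟩ := Rring.exists_coe_unit_eq_one_add_two_mul u⁻¹
  rw [hu]
  exact h.sq_im_eq_zero_of_mul_eq_one ha hb (hu ▸ hv ▸ Rring.coe_mul_coe_inv_s14 u)

lemma im_eq_zero_of_mem_X0 (h : IsTIQExt K L) {x : ℂ} (hx : x ∈ X0 L) : x.im = 0 := by
  obtain ⟨u₁, u₂, u₃, u₄, rfl⟩ := hx
  simp only [Complex.sub_im, Complex.add_im, h.sq_coe_unit_im_eq_zero, sub_zero, add_zero]

lemma im_eq_zero_of_mem_X1 (h : IsTIQExt K L) {x : ℂ} (hx : x ∈ X1 L) : x.im = 0 := by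
  simpa using h.im_eq_zero_of_mem_X0 hx.2

lemma exists_unit_sq_add_inv_sq_of_forall_map_nonneg (h : IsTIQExt K L)
    (hsqrt : ∀ α : ℂ, TotallyRealNum α → α ^ 2 ∈ K → α ∈ K) (c : K) (hc : IsIntegral ℤ (c : ℂ))
    (hpos : ∀ σ : K →+* ℂ, 0 ≤ σ c * (σ c + 1)) :
    ∃ U : (Rring 2 twoNZ L)ˣ, ((U : Rring 2 twoNZ L) : ℂ) ^ 2 +
      ((U⁻¹ : (Rring 2 twoNZ L)ˣ) : Rring 2 twoNZ L) ^ 2 = 2 + 16 * (c * (c + 1)) := by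
  obtain ⟨e, heK, he⟩ := exists_mem_sq_eq_of_forall_map_nonneg hsqrt (fun x => h.alg ⟨x, h.le x.2⟩)
    (c * (c + 1)) (by simpa using hpos)
  push_cast at he
  have heI : IsIntegral ℤ e := .of_pow two_pos (he ▸ hc.mul (hc.add isIntegral_one))
  exact Rring.exists_unit_sq_add_inv_sq ⟨h.le c.2, hc⟩ ⟨h.le heK, heI⟩ he

lemma mul_mem_X1 (h : IsTIQExt K L) (hsqrt : ∀ α : ℂ, TotallyRealNum α → α ^ 2 ∈ K → α ∈ K)
    {β : ℂ} (hβ : β ∈ ringOfInt K) (n : ℕ) (hn : ∀ σ : K →+* ℂ, ‖σ ⟨β, hβ.1⟩‖ ≤ n) :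
    (2 * n + 1) * β ∈ X1 L := by
  set b : K := ⟨β, hβ.1⟩
  have hunit : ∀ k : ℤ, (n : ℤ) ≤ k ∨ k ≤ -(n : ℤ) - 1 →
      ∃ U : (Rring 2 twoNZ L)ˣ, ((U : Rring 2 twoNZ L) : ℂ) ^ 2 +
        ((U⁻¹ : (Rring 2 twoNZ L)ˣ) : Rring 2 twoNZ L) ^ 2 = 2 + 16 * ((β + k) * (β + k + 1)) := by
    intro k hk
    refine mod_cast h.exists_unit_sq_add_inv_sq_of_forall_map_nonneg hsqrt (b + k)
      (by exact_mod_cast hβ.2.add (isIntegral_intCast k)) fun σ => ?_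
    have hr : ((σ b).re : ℂ) = σ b := Complex.ext (by simp) (by simp [h.tot_real σ b])
    have hre := abs_le.mp ((Complex.abs_re_le_norm (σ b)).trans (hn σ))
    have hk' : (n : ℝ) ≤ k ∨ (k : ℝ) ≤ -n - 1 := by exact_mod_cast hk
    rw [map_add, map_intCast, ← hr]
    exact_mod_cast Complex.zero_le_real.mpr (by rcases hk' with hk' | hk' <;> nlinarith)
  obtain ⟨U₁, hU₁⟩ := hunit n (.inl le_rfl)
  obtain ⟨U₂, hU₂⟩ := hunit (-n - 1) (.inr le_rfl)
  have hcoeff : (2 * n + 1 : ℂ) ∈ ringOfInt L :=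
    add_mem (mul_mem (ofNat_mem _ 2) (natCast_mem _ n)) (one_mem _)
  refine ⟨mul_mem hcoeff ⟨h.le hβ.1, hβ.2⟩, U₁, U₁⁻¹, U₂, U₂⁻¹, ?_⟩
  push_cast at hU₁ hU₂
  linear_combination hU₂ - hU₁

end IsTIQExt

/-- Let `K` be a totally real field closed under square roots (any totally real algebraic `α`
with `α² ∈ K` lies in `K`) and let `L` be a totally imaginary quadratic extension of `K`. Then
with `X₀, X₁, X` as above, `X = O_K` as subsets of `O_L`. -/
theorem X_eq_ringOfInt (K L : Subfield ℂ)
    (hsqrt : ∀ α : ℂ, TotallyRealNum α → α ^ 2 ∈ K → α ∈ K)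
    (h : IsTIQExt K L) :
    XX L = (ringOfInt K : Set ℂ) := by
  ext α
  constructor
  · rintro ⟨hα, x₁, hx₁, x₂, hx₂, h4⟩
    refine ⟨h.mem_of_im_eq_zero hα.1 ?_, hα.2⟩
    simpa [h.im_eq_zero_of_mem_X1 hx₁, h.im_eq_zero_of_mem_X1 hx₂] using congrArg Complex.im h4
  · intro hα
    obtain ⟨n, hn⟩ := exists_nat_forall_norm_ringHom_le ⟨α, hα.1⟩ (h.alg ⟨α, h.le hα.1⟩)
    refine ⟨⟨h.le hα.1, hα.2⟩, _, h.mul_mem_X1 hsqrt hα (n + 2) fun σ => (hn σ).trans ?_,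
      _, h.mul_mem_X1 hsqrt hα n hn, by push_cast; ring⟩
    exact_mod_cast Nat.le_add_right n 2

end
end

section
/- Let S be an infinite set of integers n ≥ 3, let ζ_n = exp(2πi/n), and let K₀ = ℚ({ζ_n + ζ_n⁻¹ : n ∈ S}) ⊆ ℝ. Then K₀ is totally real, for each n ∈ S the element 2 + ζ_n + ζ_n⁻¹ is an element of O_{K₀} all of whose conjugates lie in the open real interval (0, 4) (i.e., 0 < σ(2 + ζ_n + ζ_n⁻¹) < 4 for every ring homomorphism σ : K₀ → ℂ), these elements are pairwise distinct for distinct n ∈ S, and consequently the set {x ∈ O_{K₀} : 0 < σ(x) < 4 for every ring homomorphism σ : K₀ → ℂ} is infinite. -/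
open Complex

noncomputable section

/-- The primitive root of unity `ζ_n = exp(2πi/n)`. -/
def zetaC (n : ℕ) : ℂ := Complex.exp (2 * Real.pi * Complex.I / n)

/-- The field `K₀ = ℚ({ζ_n + ζ_n⁻¹ : n ∈ S})`. -/
def Kzeta (S : Set ℕ) : Subfield ℂ :=
  Subfield.closure {z : ℂ | ∃ n ∈ S, z = zetaC n + (zetaC n)⁻¹}


lemma zetaC_ne_zero (n : ℕ) : zetaC n ≠ 0 := Complex.exp_ne_zero _

lemma zetaC_pow {n : ℕ} (hn : n ≠ 0) : zetaC n ^ n = 1 := by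
  have hn' : (n : ℂ) ≠ 0 := Nat.cast_ne_zero.mpr hn
  rw [zetaC, ← Complex.exp_nat_mul, mul_div_cancel₀ _ hn']
  exact Complex.exp_two_pi_mul_I

lemma alpha_eq {n : ℕ} (hn : n ≠ 0) :
    zetaC n + (zetaC n)⁻¹ = ((2 * Real.cos (2 * Real.pi / n) : ℝ) : ℂ) := by
  have h1 : (2 * (Real.pi : ℂ) * Complex.I / n) = ((2 * Real.pi / n : ℝ) : ℂ) * Complex.I := by
    push_cast; ring
  rw [zetaC, h1, ← Complex.exp_neg, ← neg_mul, Complex.exp_mul_I, Complex.exp_mul_I,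
    Complex.cos_neg, Complex.sin_neg]
  push_cast [Complex.ofReal_cos]
  ring

open Polynomial in
lemma dickson_root_real {n : ℕ} (hn : n ≠ 0) {β : ℂ}
    (h : (Polynomial.dickson 1 1 n).eval β = 2) :
    β.im = 0 ∧ |β.re| ≤ 2 := by
  have hdeg : 0 < (Polynomial.C (1:ℂ) * X ^ 2 + Polynomial.C (-β) * X + Polynomial.C 1).degree := by
    rw [Polynomial.degree_quadratic one_ne_zero]; norm_num
  obtain ⟨w, hw⟩ := Complex.exists_root hdeg
  have hw' : w ^ 2 - β * w + 1 = 0 := by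
    have := hw
    simp only [Polynomial.IsRoot, Polynomial.eval_add, Polynomial.eval_mul, Polynomial.eval_pow,
      Polynomial.eval_C, Polynomial.eval_X] at this
    linear_combination this
  have hw0 : w ≠ 0 := by
    rintro rfl; simp at hw'
  have hβ : β = w + w⁻¹ := by
    field_simp
    linear_combination -hw'
  rw [hβ] at h
  rw [Polynomial.dickson_one_one_eval_add_inv w w⁻¹ (mul_inv_cancel₀ hw0) n] at h
  have hne : w ^ n ≠ 0 := pow_ne_zero _ hw0
  have hsq : (w ^ n - 1) ^ 2 = 0 := by
    rw [inv_pow] at h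
    field_simp at h
    linear_combination h
  have hwn : w ^ n = 1 := sub_eq_zero.mp (pow_eq_zero_iff two_ne_zero |>.mp hsq)
  have habs : ‖w‖ = 1 := by
    have hpow : ‖w‖ ^ n = 1 := by rw [← norm_pow, hwn, norm_one]
    rcases lt_trichotomy (‖w‖) 1 with h1 | h1 | h1
    · exact absurd hpow (by simpa using (pow_lt_one₀ (norm_nonneg w) h1 hn).ne)
    · exact h1
    · exact absurd hpow (by simpa using (one_lt_pow₀ h1 hn).ne')
  have hconj : w⁻¹ = (starRingEnd ℂ) w := Complex.inv_eq_conj habs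
  have hre : |w.re| ≤ 1 := habs ▸ Complex.abs_re_le_norm w
  constructor
  · rw [hβ, hconj]; simp
  · rw [hβ, hconj]
    simp only [Complex.add_re, Complex.conj_re]
    rw [show w.re + w.re = 2 * w.re by ring, abs_mul]
    calc |(2:ℝ)| * |w.re| ≤ 2 * 1 := by
          apply mul_le_mul (by norm_num) hre (abs_nonneg _) (by norm_num)
      _ = 2 := by norm_num

lemma eval_dickson_alpha {n : ℕ} (hn : n ≠ 0) :
    (Polynomial.dickson 1 (1:ℂ) n).eval (zetaC n + (zetaC n)⁻¹) = 2 := by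
  rw [Polynomial.dickson_one_one_eval_add_inv _ _ (mul_inv_cancel₀ (zetaC_ne_zero n)) n,
    inv_pow, zetaC_pow hn]
  norm_num

lemma sigma_applied {K : Subfield ℂ} (σ : ↥K →+* ℂ) {n : ℕ} (hn : n ≠ 0)
    {x : ↥K} (hx : (x : ℂ) = zetaC n + (zetaC n)⁻¹) :
    (σ x).im = 0 ∧ |(σ x).re| ≤ 2 := by
  have hK : (Polynomial.dickson 1 (1 : ↥K) n).eval x = 2 := by
    apply Subtype.coe_injective
    have h1 : (K.subtype) ((Polynomial.dickson 1 (1 : ↥K) n).eval x)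
        = (Polynomial.dickson 1 (1:ℂ) n).eval ((x : ℂ)) := by
      rw [← Polynomial.eval₂_at_apply, ← Polynomial.eval_map, Polynomial.map_dickson, map_one]
      rfl
    have := h1
    rw [hx, eval_dickson_alpha hn] at this
    exact this.trans (by norm_cast)
  have h2 : (Polynomial.dickson 1 (1:ℂ) n).eval (σ x) = 2 := by
    have h1 : σ ((Polynomial.dickson 1 (1 : ↥K) n).eval x)
        = (Polynomial.dickson 1 (1:ℂ) n).eval (σ x) := by
      rw [← Polynomial.eval₂_at_apply, ← Polynomial.eval_map, Polynomial.map_dickson, map_one]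
    rw [hK, map_ofNat] at h1
    exact h1.symm
  exact dickson_root_real hn h2

open Polynomial in
lemma zeta_integral {n : ℕ} (hn : n ≠ 0) : IsIntegral ℤ (zetaC n) := by
  refine ⟨X ^ n - Polynomial.C 1, Polynomial.monic_X_pow_sub_C 1 hn, ?_⟩
  simp [Polynomial.eval₂_sub, zetaC_pow hn]

lemma zeta_inv_integral {n : ℕ} (hn : n ≠ 0) : IsIntegral ℤ (zetaC n)⁻¹ := by
  have h : (zetaC n)⁻¹ = zetaC n ^ (n - 1) :=
    inv_eq_of_mul_eq_one_right (by
      rw [← pow_succ', Nat.sub_add_cancel (by omega : 1 ≤ n), zetaC_pow hn])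
  rw [h]
  exact (zeta_integral hn).pow _

lemma theta_bounds {n : ℕ} (hn : 3 ≤ n) :
    0 < 2 * Real.pi / n ∧ 2 * Real.pi / n < Real.pi := by
  have hpi := Real.pi_pos
  have hn0 : (0:ℝ) < n := by positivity
  refine ⟨by positivity, ?_⟩
  rw [div_lt_iff₀ hn0]
  have : (3:ℝ) ≤ n := by exact_mod_cast hn
  nlinarith

lemma cos_bounds {n : ℕ} (hn : 3 ≤ n) :
    -1 < Real.cos (2 * Real.pi / n) ∧ Real.cos (2 * Real.pi / n) < 1 := by
  have hpi := Real.pi_pos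
  obtain ⟨hθ0, hθπ⟩ := theta_bounds hn
  constructor
  · have := Real.strictAntiOn_cos ⟨hθ0.le, hθπ.le⟩ ⟨hpi.le, le_rfl⟩ hθπ
    simpa [Real.cos_pi] using this
  · have := Real.strictAntiOn_cos ⟨le_rfl, hpi.le⟩ ⟨hθ0.le, hθπ.le⟩ hθ0
    simpa [Real.cos_zero] using this

/-- Let `S` be an infinite set of integers `n ≥ 3` and `K₀ = ℚ({ζ_n + ζ_n⁻¹ : n ∈ S}) ⊆ ℝ`.
Then `K₀` is totally real, each `2 + ζ_n + ζ_n⁻¹` lies in `O_{K₀}` with all conjugates in the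
open interval `(0, 4)`, these elements are pairwise distinct, and consequently the set of
elements of `O_{K₀}` all of whose conjugates lie in `(0, 4)` is infinite. -/
theorem JR_number_four (S : Set ℕ) (hS : S.Infinite) (hS3 : ∀ n ∈ S, 3 ≤ n) :
    (∀ z ∈ Kzeta S, z.im = 0) ∧
    IsTotallyRealSubfield (Kzeta S) ∧
    (∀ n ∈ S, (2 + zetaC n + (zetaC n)⁻¹) ∈ ringOfInt (Kzeta S) ∧
      ∀ (σ : Kzeta S →+* ℂ) (z : Kzeta S), (z : ℂ) = 2 + zetaC n + (zetaC n)⁻¹ →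
        ∃ r : ℝ, σ z = (r : ℂ) ∧ 0 < r ∧ r < 4) ∧
    (∀ n ∈ S, ∀ m ∈ S, n ≠ m →
      2 + zetaC n + (zetaC n)⁻¹ ≠ 2 + zetaC m + (zetaC m)⁻¹) ∧
    {x : ℂ | x ∈ ringOfInt (Kzeta S) ∧
      ∀ (σ : Kzeta S →+* ℂ) (z : Kzeta S), (z : ℂ) = x →
        ∃ r : ℝ, σ z = (r : ℂ) ∧ 0 < r ∧ r < 4}.Infinite := by
  have part3 : ∀ n ∈ S, (2 + zetaC n + (zetaC n)⁻¹) ∈ ringOfInt (Kzeta S) ∧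
      ∀ (σ : Kzeta S →+* ℂ) (z : Kzeta S), (z : ℂ) = 2 + zetaC n + (zetaC n)⁻¹ →
        ∃ r : ℝ, σ z = (r : ℂ) ∧ 0 < r ∧ r < 4 := by
    intro n hnS
    have hn3 := hS3 n hnS
    have hn0 : n ≠ 0 := by omega
    have hgen : zetaC n + (zetaC n)⁻¹ ∈ Kzeta S := Subfield.subset_closure ⟨n, hnS, rfl⟩
    have hcos := cos_bounds hn3
    constructor
    · constructor
      · have h2 : (2:ℂ) ∈ Kzeta S := by
          have := natCast_mem (Kzeta S) 2
          simpa using this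
        rw [add_assoc]
        exact (Kzeta S).add_mem h2 hgen
      · have h2 : IsIntegral ℤ (2:ℂ) := by
          have : IsIntegral ℤ ((algebraMap ℤ ℂ) 2) := isIntegral_algebraMap
          simpa using this
        exact (h2.add (zeta_integral hn0)).add (zeta_inv_integral hn0)
    · intro σ z hz
      have h2c : ((2 : Kzeta S) : ℂ) = 2 := map_ofNat (Kzeta S).subtype 2
      have hyc : ((z - 2 : Kzeta S) : ℂ) = zetaC n + (zetaC n)⁻¹ := by
        push_cast [hz, h2c]; ring
      obtain ⟨him, hre⟩ := sigma_applied σ hn0 hyc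
      have hσz : σ z = σ (z - 2) + 2 := by
        rw [map_sub, map_ofNat]; ring
      have hyreal : ((z - 2 : Kzeta S) : ℂ) = ((2 * Real.cos (2 * Real.pi / n) : ℝ) : ℂ) :=
        hyc.trans (alpha_eq hn0)
      have hne2 : (σ (z - 2)).re ≠ 2 := by
        intro hrec
        have he : σ (z - 2) = σ (2 : Kzeta S) := by
          rw [map_ofNat]
          exact Complex.ext (by simpa using hrec) (by simpa using him)
        have := σ.injective he
        have hc : ((z - 2 : Kzeta S) : ℂ) = 2 := by rw [this]; exact h2c
        rw [hyreal] at hc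
        have : 2 * Real.cos (2 * Real.pi / n) = 2 := by exact_mod_cast hc
        linarith [hcos.2]
      have hnem2 : (σ (z - 2)).re ≠ -2 := by
        intro hrec
        have he : σ (z - 2) = σ (-2 : Kzeta S) := by
          rw [map_neg, map_ofNat]
          exact Complex.ext (by simpa using hrec) (by simpa using him)
        have := σ.injective he
        have hc : ((z - 2 : Kzeta S) : ℂ) = -2 := by rw [this]; push_cast [h2c]; ring
        rw [hyreal] at hc
        have : 2 * Real.cos (2 * Real.pi / n) = -2 := by exact_mod_cast hc
        linarith [hcos.1]
      obtain ⟨hge, hle⟩ := abs_le.mp hre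
      refine ⟨(σ (z - 2)).re + 2, ?_, ?_, ?_⟩
      · rw [hσz]
        apply Complex.ext
        · simp only [Complex.add_re, Complex.re_ofNat, Complex.ofReal_re]
        · simp only [Complex.add_im, Complex.im_ofNat, Complex.ofReal_im, him, add_zero]
      · have : -2 < (σ (z - 2)).re := lt_of_le_of_ne hge (Ne.symm hnem2)
        linarith
      · have : (σ (z - 2)).re < 2 := lt_of_le_of_ne hle hne2
        linarith
  have part2 : IsTotallyRealSubfield (Kzeta S) := by
    intro σ x
    set F : Subfield ↥(Kzeta S) := (Complex.ofRealHom.fieldRange).comap σ with hF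
    have hsub : Subfield.closure {w : ℂ | ∃ n ∈ S, w = zetaC n + (zetaC n)⁻¹}
        ≤ (F.map (Kzeta S).subtype) := by
      apply Subfield.closure_le.mpr
      rintro g ⟨n, hnS, rfl⟩
      have hg : zetaC n + (zetaC n)⁻¹ ∈ Kzeta S := Subfield.subset_closure ⟨n, hnS, rfl⟩
      have hn0 : n ≠ 0 := by have := hS3 n hnS; omega
      have him := (sigma_applied σ hn0 (x := ⟨_, hg⟩) rfl).1
      refine ⟨⟨_, hg⟩, ?_, rfl⟩
      exact ⟨(σ ⟨_, hg⟩).re, Complex.ext rfl (by simpa using him.symm)⟩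
    obtain ⟨y, hyF, hyx⟩ := hsub x.2
    have hxy : y = x := Subtype.coe_injective hyx
    rw [← hxy]
    obtain ⟨r, hr⟩ := hyF
    rw [← hr]
    simp
  have part4 : ∀ n ∈ S, ∀ m ∈ S, n ≠ m →
      2 + zetaC n + (zetaC n)⁻¹ ≠ 2 + zetaC m + (zetaC m)⁻¹ := by
    intro n hnS m hmS hnm heq
    have hn3 := hS3 n hnS
    have hm3 := hS3 m hmS
    have hn0 : n ≠ 0 := by omega
    have hm0 : m ≠ 0 := by omega
    have h1 : zetaC n + (zetaC n)⁻¹ = zetaC m + (zetaC m)⁻¹ := by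
      have := heq
      rw [add_assoc, add_assoc] at this
      exact add_left_cancel this
    rw [alpha_eq hn0, alpha_eq hm0] at h1
    have h2 : 2 * Real.cos (2 * Real.pi / n) = 2 * Real.cos (2 * Real.pi / m) := by
      exact_mod_cast h1
    have h3 : Real.cos (2 * Real.pi / n) = Real.cos (2 * Real.pi / m) := by linarith
    obtain ⟨hn1, hn2⟩ := theta_bounds hn3
    obtain ⟨hm1, hm2⟩ := theta_bounds hm3
    have h4 : 2 * Real.pi / n = 2 * Real.pi / m :=
      Real.injOn_cos ⟨hn1.le, hn2.le⟩ ⟨hm1.le, hm2.le⟩ h3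
    have hnr : ((n:ℝ)) ≠ 0 := Nat.cast_ne_zero.mpr hn0
    have hmr : ((m:ℝ)) ≠ 0 := Nat.cast_ne_zero.mpr hm0
    rw [div_eq_div_iff hnr hmr] at h4
    have hpi := Real.pi_pos
    have : (m:ℝ) = n := mul_left_cancel₀ (by positivity : (2 * Real.pi : ℝ) ≠ 0) h4
    exact hnm (by exact_mod_cast this.symm)
  refine ⟨fun z hz => by simpa using part2 (Kzeta S).subtype ⟨z, hz⟩, part2, part3, part4, ?_⟩
  have hinj : Set.InjOn (fun n : ℕ => 2 + zetaC n + (zetaC n)⁻¹) S := by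
    intro n hn m hm h
    by_contra hne
    exact part4 n hn m hm hne h
  have himg : ((fun n : ℕ => 2 + zetaC n + (zetaC n)⁻¹) '' S).Infinite :=
    (Set.infinite_image_iff hinj).mpr hS
  refine Set.Infinite.mono ?_ himg
  rintro x ⟨n, hnS, rfl⟩
  exact part3 n hnS

end
end
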